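/- arXiv:1103.4032 — 8 statements merged into one kernel-verified Lean document; each statement's English description precedes it below -/
import Mathlib

section
/- Let d ≥ 1 and n ≥ 1, and let ρ be a density matrix on (ℂ^d)^{⊗n} (system registers A₁,…,Aₙ) that is strictly classically correlated. Then there exist unitaries U₁,…,Uₙ on ℂ^d such that the output of the activation protocol, ρ̃ = V (ρ ⊗ |0⟩⟨0|^{⊗n}) V† with V = C_{A:A'} · (U₁⊗⋯⊗Uₙ ⊗ 𝟙_{A'}), is separable across the bipartite cut A : A' (where A = A₁…Aₙ and A' = A'₁…A'ₙ). -/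
/-! Rotating each qudit by `(B i)ᴴ` turns `ρ` into a state `D` that is diagonal in the
computational basis. On such a state the CNOT gates copy the classical index into the ancilla,
so the output is `∑ j, D j j • (|j⟩⟨j| ⊗ |j⟩⟨j|)`, a convex combination of product states. -/

open Matrix Kronecker BigOperators
open scoped ComplexOrder

noncomputable section

/-- `n`-fold Kronecker/tensor product of single-qudit matrices, acting on
`(ℂ^d)^{⊗ n}` indexed by multi-indices in `Fin n → ZMod d`. -/
def piTensor {d n : ℕ} (U : Fin n → Matrix (ZMod d) (ZMod d) ℂ) :
    Matrix (Fin n → ZMod d) (Fin n → ZMod d) ℂ :=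
  Matrix.of fun j k => ∏ i, U i (j i) (k i)

/-- The generalized CNOT gate `C_{A:A'} = ⊗ᵢ C_{Aᵢ:A'ᵢ}` on `n` system-ancilla qudit
pairs: `C |j⟩|j'⟩ = |j⟩|j' ⊕ j⟩` with addition modulo `d` (componentwise). -/
def cnotN (d n : ℕ) :
    Matrix ((Fin n → ZMod d) × (Fin n → ZMod d)) ((Fin n → ZMod d) × (Fin n → ZMod d)) ℂ :=
  Matrix.of fun p q => if p.1 = q.1 ∧ p.2 = q.2 + q.1 then 1 else 0

/-- The initial ancilla state `|0⟩⟨0|^{⊗ n}`. -/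
def anc0 (d n : ℕ) : Matrix (Fin n → ZMod d) (Fin n → ZMod d) ℂ :=
  Matrix.of fun j k => if j = 0 ∧ k = 0 then 1 else 0

/-- The output `ρ̃ = V (ρ ⊗ |0⟩⟨0|^{⊗n}) V†` of the activation protocol, where
`V = C_{A:A'} · (U₁ ⊗ ⋯ ⊗ Uₙ ⊗ 𝟙_{A'})`. -/
def outState {d n : ℕ} [NeZero d] (ρ : Matrix (Fin n → ZMod d) (Fin n → ZMod d) ℂ)
    (U : Fin n → Matrix (ZMod d) (ZMod d) ℂ) :
    Matrix ((Fin n → ZMod d) × (Fin n → ZMod d)) ((Fin n → ZMod d) × (Fin n → ZMod d)) ℂ :=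
  (cnotN d n * (piTensor U ⊗ₖ (1 : Matrix (Fin n → ZMod d) (Fin n → ZMod d) ℂ))) *
    (ρ ⊗ₖ anc0 d n) *
  (cnotN d n * (piTensor U ⊗ₖ (1 : Matrix (Fin n → ZMod d) (Fin n → ZMod d) ℂ)))ᴴ

/-- A bipartite state on `H_A ⊗ H_{A'}` is separable across `A : A'` if it is a finite
convex combination of tensor products of rank-one projectors onto unit vectors. -/
def SeparableState {α β : Type*} [Fintype α] [Fintype β]
    (σ : Matrix (α × β) (α × β) ℂ) : Prop :=
  ∃ (N : ℕ) (q : Fin N → ℝ) (ψ : Fin N → α → ℂ) (φ : Fin N → β → ℂ),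
    (∀ a, 0 ≤ q a) ∧ (∑ a, q a = 1) ∧
    (∀ a, ∑ x, ‖ψ a x‖ ^ 2 = 1) ∧ (∀ a, ∑ x, ‖φ a x‖ ^ 2 = 1) ∧
    σ = ∑ a, (q a : ℂ) • (vecMulVec (ψ a) (star (ψ a)) ⊗ₖ vecMulVec (φ a) (star (φ a)))

/-- An `n`-qudit state is strictly classically correlated if there are local orthonormal
bases (encoded as the columns of local unitaries `B i`) with respect to whose tensor
product the state is diagonal. -/
def StrictlyClassical {d n : ℕ} [NeZero d]
    (ρ : Matrix (Fin n → ZMod d) (Fin n → ZMod d) ℂ) : Prop :=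
  ∃ B : Fin n → Matrix (ZMod d) (ZMod d) ℂ,
    (∀ i, B i ∈ Matrix.unitaryGroup (ZMod d) ℂ) ∧
    ((piTensor B)ᴴ * ρ * piTensor B).IsDiag

section piTensor

variable {d n : ℕ}

lemma piTensor_conjTranspose (U : Fin n → Matrix (ZMod d) (ZMod d) ℂ) :
    (piTensor U)ᴴ = piTensor fun i => (U i)ᴴ := by
  ext j k
  simp [piTensor, conjTranspose_apply, star_prod]

lemma piTensor_one : piTensor (fun _ : Fin n => (1 : Matrix (ZMod d) (ZMod d) ℂ)) = 1 := by
  ext j k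
  simp [piTensor, one_apply, Finset.prod_boole, funext_iff]

variable [NeZero d]

lemma piTensor_mul (U V : Fin n → Matrix (ZMod d) (ZMod d) ℂ) :
    piTensor U * piTensor V = piTensor fun i => U i * V i := by
  ext j k
  simp only [mul_apply, piTensor, of_apply, Fintype.prod_sum, Finset.prod_mul_distrib]

lemma piTensor_mem_unitaryGroup {U : Fin n → Matrix (ZMod d) (ZMod d) ℂ}
    (hU : ∀ i, U i ∈ unitaryGroup (ZMod d) ℂ) : piTensor U ∈ unitaryGroup _ ℂ := by
  simp only [mem_unitaryGroup_iff, star_eq_conjTranspose] at hU ⊢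
  simp [piTensor_conjTranspose, piTensor_mul, hU, piTensor_one]

end piTensor

theorem SeparableState.of_sum {α β ι : Type*} [Fintype α] [Fintype β] [Fintype ι]
    (w : ι → ℝ) (ψ : ι → α → ℂ) (φ : ι → β → ℂ) (hw : ∀ i, 0 ≤ w i) (hw₁ : ∑ i, w i = 1)
    (hψ : ∀ i, ∑ x, ‖ψ i x‖ ^ 2 = 1) (hφ : ∀ i, ∑ x, ‖φ i x‖ ^ 2 = 1) :
    SeparableState
      (∑ i, (w i : ℂ) • (vecMulVec (ψ i) (star (ψ i)) ⊗ₖ vecMulVec (φ i) (star (φ i)))) := by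
  let e := Fintype.equivFin ι
  refine ⟨Fintype.card ι, w ∘ e.symm, ψ ∘ e.symm, φ ∘ e.symm, fun a => hw _,
    ?_, fun a => hψ _, fun a => hφ _, ?_⟩
  · rwa [← e.symm.sum_comp w] at hw₁
  · exact (e.symm.sum_comp (fun i => (w i : ℂ) • _)).symm

section cnot

variable {d n : ℕ} [NeZero d]

lemma cnotN_mul_apply
    (Y : Matrix ((Fin n → ZMod d) × (Fin n → ZMod d)) ((Fin n → ZMod d) × (Fin n → ZMod d)) ℂ)
    (p q : (Fin n → ZMod d) × (Fin n → ZMod d)) :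
    (cnotN d n * Y) p q = Y (p.1, p.2 - p.1) q := by
  rw [mul_apply, Finset.sum_eq_single (p.1, p.2 - p.1)]
  · simp [cnotN]
  · rintro ⟨b₁, b₂⟩ - hb
    have : ¬(p.1 = b₁ ∧ p.2 = b₂ + b₁) := by
      rintro ⟨h₁, h₂⟩
      exact hb (by simp [← h₁, h₂])
    simp [cnotN, this]
  · simp

lemma cnotN_conj_apply
    (Y : Matrix ((Fin n → ZMod d) × (Fin n → ZMod d)) ((Fin n → ZMod d) × (Fin n → ZMod d)) ℂ)
    (p q : (Fin n → ZMod d) × (Fin n → ZMod d)) :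
    (cnotN d n * Y * (cnotN d n)ᴴ) p q = Y (p.1, p.2 - p.1) (q.1, q.2 - q.1) := by
  rw [mul_assoc, cnotN_mul_apply, ← conjTranspose_conjTranspose (Y * _), conjTranspose_apply,
    conjTranspose_mul, conjTranspose_conjTranspose, cnotN_mul_apply, conjTranspose_apply,
    star_star]

lemma outState_eq_cnotN_conj (ρ : Matrix (Fin n → ZMod d) (Fin n → ZMod d) ℂ)
    (U : Fin n → Matrix (ZMod d) (ZMod d) ℂ) :
    outState ρ U =
      cnotN d n * ((piTensor U * ρ * (piTensor U)ᴴ) ⊗ₖ anc0 d n) * (cnotN d n)ᴴ := by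
  have h : (piTensor U ⊗ₖ 1) * (ρ ⊗ₖ anc0 d n) * ((piTensor U)ᴴ ⊗ₖ 1) =
      (piTensor U * ρ * (piTensor U)ᴴ) ⊗ₖ anc0 d n := by
    rw [← mul_kronecker_mul, ← mul_kronecker_mul, one_mul, mul_one]
  rw [outState, conjTranspose_mul, conjTranspose_kronecker, conjTranspose_one, ← h]
  simp only [mul_assoc]

lemma cnotN_conj_kronecker_anc0 {D : Matrix (Fin n → ZMod d) (Fin n → ZMod d) ℂ} (hD : D.IsDiag) :
    cnotN d n * (D ⊗ₖ anc0 d n) * (cnotN d n)ᴴ =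
      ∑ j, D j j • (vecMulVec (Pi.single j 1) (star (Pi.single j 1)) ⊗ₖ
        vecMulVec (Pi.single j 1) (star (Pi.single j 1))) := by
  ext ⟨j₁, j₂⟩ ⟨k₁, k₂⟩
  rw [cnotN_conj_apply, Matrix.sum_apply]
  simp only [anc0, kroneckerMap_apply, of_apply, sub_eq_zero, mul_ite, mul_one, mul_zero,
    Pi.star_single, star_one, Matrix.smul_apply, vecMulVec_apply, Pi.single_apply, smul_eq_mul,
    Finset.sum_ite_eq, Finset.mem_univ, ↓reduceIte]
  rcases eq_or_ne j₁ k₁ with rfl | hjk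
  · split_ifs <;> grind
  · rw [hD hjk]
    split_ifs <;> grind

lemma separableState_cnotN_conj_kronecker_anc0 {D : Matrix (Fin n → ZMod d) (Fin n → ZMod d) ℂ}
    (hD : D.PosSemidef) (hD₁ : D.trace = 1) (hdiag : D.IsDiag) :
    SeparableState (cnotN d n * (D ⊗ₖ anc0 d n) * (cnotN d n)ᴴ) := by
  have hunit (j : Fin n → ZMod d) : ∑ x, ‖(Pi.single j 1 : _ → ℂ) x‖ ^ 2 = 1 := by
    simp [Pi.single_apply, apply_ite (fun z : ℂ => ‖z‖ ^ 2)]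
  have hsum : ∑ j, (D j j).re = 1 := by
    simpa [trace, Complex.re_sum] using congrArg Complex.re hD₁
  rw [cnotN_conj_kronecker_anc0 hdiag,
    Finset.sum_congr rfl fun j _ => by rw [← hD.isHermitian.coe_re_apply_self j]]
  exact SeparableState.of_sum _ _ _ (fun j => (Complex.nonneg_iff.mp hD.diag_nonneg).1) hsum
    hunit hunit

end cnot

theorem classical_implies_separable_output_general (d n : ℕ) [NeZero d]
    (ρ : Matrix (Fin n → ZMod d) (Fin n → ZMod d) ℂ)
    (hρ : ρ.PosSemidef) (hρtr : ρ.trace = 1)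
    (hcl : StrictlyClassical ρ) :
    ∃ U : Fin n → Matrix (ZMod d) (ZMod d) ℂ,
      (∀ i, U i ∈ Matrix.unitaryGroup (ZMod d) ℂ) ∧
      SeparableState (outState ρ U) := by
  obtain ⟨B, hB, hdiag⟩ := hcl
  have hP : piTensor B * (piTensor B)ᴴ = 1 :=
    mem_unitaryGroup_iff.mp (piTensor_mem_unitaryGroup hB)
  refine ⟨fun i => (B i)ᴴ, fun i => Unitary.star_mem (hB i), ?_⟩
  rw [outState_eq_cnotN_conj, ← piTensor_conjTranspose, conjTranspose_conjTranspose]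
  refine separableState_cnotN_conj_kronecker_anc0 (hρ.conjTranspose_mul_mul_same _) ?_ hdiag
  rw [trace_mul_cycle, hP, one_mul, hρtr]

/-- If the input `n`-qudit density matrix is strictly classically correlated, then there
is an adversarial choice of local unitaries such that the output of the activation
protocol is separable across the system : ancilla cut. -/
theorem classical_implies_separable_output (d n : ℕ) [NeZero d] (hn : 1 ≤ n)
    (ρ : Matrix (Fin n → ZMod d) (Fin n → ZMod d) ℂ)
    (hρ : ρ.PosSemidef) (hρtr : ρ.trace = 1)
    (hcl : StrictlyClassical ρ) :
    ∃ U : Fin n → Matrix (ZMod d) (ZMod d) ℂ,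
      (∀ i, U i ∈ Matrix.unitaryGroup (ZMod d) ℂ) ∧
      SeparableState (outState ρ U) :=
  classical_implies_separable_output_general d n ρ hρ hρtr hcl
end
end

section
/- Let d ≥ 1 and n ≥ 1, let ρ be a density matrix on (ℂ^d)^{⊗n}, and let U_A = U₁⊗⋯⊗Uₙ be any tensor product of unitaries on ℂ^d. Then the output ρ̃ = V (ρ ⊗ |0⟩⟨0|^{⊗n}) V† of the activation protocol, with V = C_{A:A'} · (U_A ⊗ 𝟙_{A'}), has matrix entries ρ̃_{(j,j'),(k,k')} = δ_{j',j} · δ_{k',k} · (U_A ρ U_A†)_{j,k} for multi-indices j, j', k, k' ∈ (ZMod d)^n; equivalently, ρ̃ = Σ_{k,l} (U_A ρ U_A†)_{k,l} |k⟩⟨l|_A ⊗ |k⟩⟨l|_{A'} is in maximally correlated form across A : A'. -/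
open Matrix Kronecker BigOperators
open scoped ComplexOrder

noncomputable section

/-! Conjugating `ρ ⊗ |0⟩⟨0|` by `U_A ⊗ 𝟙` gives `U_A ρ U_A† ⊗ |0⟩⟨0|`. The CNOT gate is the
permutation matrix of the shear `(j, j') ↦ (j, j' + j)`, so conjugating by it only relabels
entries: the new entry at `((j, j'), (k, k'))` is the old one at `((j, j' - j), (k, k' - k))`,
and the ancilla factor `|0⟩⟨0|` kills it unless `j' = j` and `k' = k`. -/

def cnotPerm (G : Type*) [AddGroup G] : Equiv.Perm (G × G) :=
  Equiv.prodShear (Equiv.refl G) Equiv.addRight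

@[simp]
lemma cnotPerm_symm_apply {G : Type*} [AddGroup G] (p : G × G) :
    (cnotPerm G).symm p = (p.1, p.2 - p.1) := by
  simp [cnotPerm, Equiv.prodShear, sub_eq_add_neg]

lemma cnotN_eq_submatrix (d n : ℕ) :
    cnotN d n = (1 : Matrix _ _ ℂ).submatrix id (cnotPerm (Fin n → ZMod d)) := by
  ext p q
  simp [cnotN, cnotPerm, Equiv.prodShear, Matrix.one_apply, Prod.ext_iff]

lemma cnotN_mul_mul_conjTranspose (d n : ℕ) [NeZero d]
    (M : Matrix ((Fin n → ZMod d) × (Fin n → ZMod d)) ((Fin n → ZMod d) × (Fin n → ZMod d)) ℂ) :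
    cnotN d n * M * (cnotN d n)ᴴ =
      M.submatrix (cnotPerm (Fin n → ZMod d)).symm (cnotPerm (Fin n → ZMod d)).symm := by
  rw [cnotN_eq_submatrix, conjTranspose_submatrix, conjTranspose_one, one_submatrix_mul,
    mul_submatrix_one]
  rfl

lemma kronecker_one_mul_kronecker_mul_conjTranspose {l m n R : Type*} [Fintype m] [Fintype n]
    [DecidableEq n] [CommSemiring R] [StarRing R]
    (A : Matrix l m R) (B : Matrix m m R) (C : Matrix n n R) :
    (A ⊗ₖ (1 : Matrix n n R)) * (B ⊗ₖ C) * (A ⊗ₖ (1 : Matrix n n R))ᴴ = (A * B * Aᴴ) ⊗ₖ C := by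
  rw [conjTranspose_kronecker, conjTranspose_one, ← mul_kronecker_mul, ← mul_kronecker_mul,
    one_mul, mul_one]

lemma outState_eq_submatrix {d n : ℕ} [NeZero d] (ρ : Matrix (Fin n → ZMod d) (Fin n → ZMod d) ℂ)
    (U : Fin n → Matrix (ZMod d) (ZMod d) ℂ) :
    outState ρ U = ((piTensor U * ρ * (piTensor U)ᴴ) ⊗ₖ anc0 d n).submatrix
      (cnotPerm (Fin n → ZMod d)).symm (cnotPerm (Fin n → ZMod d)).symm := by
  rw [outState, conjTranspose_mul, ← Matrix.mul_assoc, Matrix.mul_assoc _ _ (ρ ⊗ₖ anc0 d n),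
    Matrix.mul_assoc _ (_ * _), kronecker_one_mul_kronecker_mul_conjTranspose,
    cnotN_mul_mul_conjTranspose]

lemma outState_apply {d n : ℕ} [NeZero d] (ρ : Matrix (Fin n → ZMod d) (Fin n → ZMod d) ℂ)
    (U : Fin n → Matrix (ZMod d) (ZMod d) ℂ) (j j' k k' : Fin n → ZMod d) :
    outState ρ U (j, j') (k, k') =
      if j' = j ∧ k' = k then (piTensor U * ρ * (piTensor U)ᴴ) j k else 0 := by
  simp [outState_eq_submatrix, anc0, sub_eq_zero]

lemma sum_single_diag_apply {ι R : Type*} [Fintype ι] [DecidableEq ι] [AddCommMonoid R]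
    (σ : Matrix ι ι R) (j j' k k' : ι) :
    (∑ a, ∑ b, Matrix.single (a, a) (b, b) (σ a b)) (j, j') (k, k') =
      if j' = j ∧ k' = k then σ j k else 0 := by
  simp only [Matrix.sum_apply, single_apply, Prod.mk.injEq, ite_and, Finset.sum_ite_irrel,
    Finset.sum_ite_eq', Finset.mem_univ, ↓reduceIte, Finset.sum_const_zero]
  split_ifs <;> simp_all

theorem outState_maximally_correlated_general (d n : ℕ) [NeZero d]
    (ρ : Matrix (Fin n → ZMod d) (Fin n → ZMod d) ℂ)
    (U : Fin n → Matrix (ZMod d) (ZMod d) ℂ) :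
    (∀ j j' k k' : Fin n → ZMod d,
      outState ρ U (j, j') (k, k') =
        if j' = j ∧ k' = k then (piTensor U * ρ * (piTensor U)ᴴ) j k else 0) ∧
    outState ρ U =
      ∑ k : Fin n → ZMod d, ∑ l : Fin n → ZMod d,
        Matrix.single (k, k) (l, l) ((piTensor U * ρ * (piTensor U)ᴴ) k l) := by
  refine ⟨outState_apply ρ U, ?_⟩
  ext ⟨j, j'⟩ ⟨k, k'⟩
  rw [outState_apply, sum_single_diag_apply]

/-- The output of the activation protocol has the maximally correlated form
`ρ̃ = Σ_{k,l} (U_A ρ U_A†)_{k,l} |k⟩⟨l|_A ⊗ |k⟩⟨l|_{A'}`; entrywise,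
`ρ̃_{(j,j'),(k,k')} = δ_{j',j} δ_{k',k} (U_A ρ U_A†)_{j,k}`. -/
theorem outState_maximally_correlated (d n : ℕ) [NeZero d] (hn : 1 ≤ n)
    (ρ : Matrix (Fin n → ZMod d) (Fin n → ZMod d) ℂ)
    (hρ : ρ.PosSemidef) (hρtr : ρ.trace = 1)
    (U : Fin n → Matrix (ZMod d) (ZMod d) ℂ)
    (hU : ∀ i, U i ∈ Matrix.unitaryGroup (ZMod d) ℂ) :
    (∀ j j' k k' : Fin n → ZMod d,
      outState ρ U (j, j') (k, k') =
        if j' = j ∧ k' = k then (piTensor U * ρ * (piTensor U)ᴴ) j k else 0) ∧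
    outState ρ U =
      ∑ k : Fin n → ZMod d, ∑ l : Fin n → ZMod d,
        Matrix.single (k, k) (l, l) ((piTensor U * ρ * (piTensor U)ᴴ) k l) :=
  outState_maximally_correlated_general d n ρ U
end
end

section
/- Let ρ be a density matrix on ℂ^D (entries ρ_{k,l}), and let ρ̃ = Σ_{k,l} ρ_{k,l} |k⟩⟨l| ⊗ |k⟩⟨l| be the corresponding maximally correlated state on ℂ^D ⊗ ℂ^D. Then the trace norm of the partial transpose of ρ̃ on the first factor satisfies ‖ρ̃^{T_A}‖₁ = Σ_k ρ_{k,k} + Σ_{k≠l} |ρ_{k,l}| = 1 + Σ_{k≠l} |ρ_{k,l}|; consequently the negativity of ρ̃, defined as N(ρ̃) = (‖ρ̃^{T_A}‖₁ − 1)/2, equals (Σ_{k≠l} |ρ_{k,l}|)/2. -/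
open Matrix Kronecker BigOperators
open scoped ComplexOrder

noncomputable section

/-- Trace norm `‖X‖₁ = Tr √(X†X)` of a square complex matrix. -/
def traceNorm {m : Type*} [Fintype m] [DecidableEq m] (X : Matrix m m ℂ) : ℝ :=
  (((Matrix.posSemidef_conjTranspose_mul_self X).1.eigenvectorUnitary : Matrix m m ℂ) *
      diagonal (((↑) : ℝ → ℂ) ∘ (√·) ∘ (Matrix.posSemidef_conjTranspose_mul_self X).1.eigenvalues) *
      (star ((Matrix.posSemidef_conjTranspose_mul_self X).1.eigenvectorUnitary :
        Matrix m m ℂ))).trace.re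

/-- The maximally correlated state `ρ̃ = Σ_{k,l} ρ_{k,l} |k⟩⟨l| ⊗ |k⟩⟨l|` on
`ℂ^D ⊗ ℂ^D` built from a matrix `ρ` on `ℂ^D`. -/
def maxCorr {D : ℕ} (ρ : Matrix (Fin D) (Fin D) ℂ) :
    Matrix (Fin D × Fin D) (Fin D × Fin D) ℂ :=
  Matrix.of fun p q => if p.1 = p.2 ∧ q.1 = q.2 then ρ p.1 q.1 else 0

/-- The partial transpose on the first tensor factor:
`(X^{T_A})_{(j,j'),(k,k')} = X_{(k,j'),(j,k')}`. -/
def ptA {D : ℕ} (X : Matrix (Fin D × Fin D) (Fin D × Fin D) ℂ) :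
    Matrix (Fin D × Fin D) (Fin D × Fin D) ℂ :=
  Matrix.of fun p q => X (q.1, p.2) (p.1, q.2)

/-!
Each row `(j, j')` of `ρ̃^{T_A}` has a single nonzero entry, `ρ_{j',j}`, in column `(j', j)`:
the partial transpose of a maximally correlated state is a monomial matrix. Hence
`(ρ̃^{T_A})† ρ̃^{T_A}` is diagonal with entries `|ρ_{k,l}|²`, its square root is diagonal with
entries `|ρ_{k,l}|`, and `‖ρ̃^{T_A}‖₁ = Σ_{k,l} |ρ_{k,l}|`. Positivity of `ρ` makes its diagonal
entries nonnegative reals, so they contribute `Σ_k ρ_{k,k} = Tr ρ = 1`.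
-/

open scoped MatrixOrder in
theorem traceNorm_eq_re_trace_sqrt {m : Type*} [Fintype m] [DecidableEq m] (X : Matrix m m ℂ) :
    traceNorm X = (CFC.sqrt (Xᴴ * X)).trace.re := by
  have hA := posSemidef_conjTranspose_mul_self X
  rw [traceNorm, CFC.sqrt_eq_cfc, cfc_nnreal_eq_real _ _ hA.nonneg, hA.1.cfc_eq, IsHermitian.cfc,
    Unitary.conjStarAlgAut_apply]
  congr 5
  funext i
  simp [Real.coe_sqrt, Real.coe_toNNReal', hA.eigenvalues_nonneg i]

open scoped MatrixOrder in
theorem traceNorm_monomial {m : Type*} [Fintype m] [DecidableEq m] (σ : Equiv.Perm m)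
    (c : m → ℂ) :
    traceNorm (of fun p q => if q = σ p then c p else 0) = ∑ p, ‖c p‖ := by
  set X : Matrix m m ℂ := of fun p q => if q = σ p then c p else 0
  have hXX : Xᴴ * X = diagonal fun q => (‖c (σ.symm q)‖ : ℂ) ^ 2 := by
    ext q q'
    simp only [X, mul_apply, conjTranspose_apply, of_apply, diagonal_apply]
    rw [Finset.sum_eq_single (σ.symm q)]
    · by_cases h : q = q' <;> simp [h, ← Complex.conj_mul', eq_comm]
    · intro p _ hp
      have hq : q ≠ σ p := fun h => hp (σ.eq_symm_apply.mpr h.symm)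
      simp [hq]
    · simp
  have hsqrt : CFC.sqrt (Xᴴ * X) = diagonal fun q => (‖c (σ.symm q)‖ : ℂ) := by
    refine CFC.sqrt_unique ?_ ?_
    · rw [hXX, diagonal_mul_diagonal]; simp [sq]
    · exact (posSemidef_diagonal_iff.mpr fun q => by positivity).nonneg
  rw [traceNorm_eq_re_trace_sqrt, hsqrt, trace_diagonal, ← Complex.ofReal_sum, Complex.ofReal_re]
  exact σ.symm.sum_comp fun p => ‖c p‖

theorem ptA_maxCorr {D : ℕ} (ρ : Matrix (Fin D) (Fin D) ℂ) :
    ptA (maxCorr ρ) = of fun p q => if q = Equiv.prodComm _ _ p then ρ p.2 p.1 else 0 := by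
  ext ⟨j, j'⟩ ⟨k, k'⟩
  simp only [ptA, maxCorr, of_apply, Equiv.prodComm_apply, Prod.swap_prod_mk, Prod.mk.injEq]
  by_cases h : k = j' ∧ k' = j
  · obtain ⟨rfl, rfl⟩ := h; simp
  · rw [if_neg h, if_neg]; tauto

theorem Matrix.PosSemidef.sum_norm_eq_sum_re_diag_add_offDiag {n : Type*} [Fintype n] [DecidableEq n] {A : Matrix n n ℂ}
    (hA : A.PosSemidef) :
    ∑ k, ∑ l, ‖A k l‖ = (∑ k, (A k k).re) + ∑ k, ∑ l, (if k = l then 0 else ‖A k l‖) := by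
  have hsplit : ∀ k l,
      ‖A k l‖ = (if k = l then (A k l).re else 0) + if k = l then 0 else ‖A k l‖ := by
    intro k l
    split_ifs with h
    · subst h
      simpa using congrArg Complex.re (Complex.norm_of_nonneg' (hA.diag_nonneg (i := k)))
    · simp
  conv_lhs => enter [2, k, 2, l]; rw [hsplit k l]
  simp only [Finset.sum_add_distrib, Finset.sum_ite_eq, Finset.mem_univ, if_true]

/-- For a density matrix `ρ` on `ℂ^D`, the trace norm of the partial transpose of the
associated maximally correlated state is `1 + Σ_{k≠l} |ρ_{k,l}|`, so its negativity
`(‖ρ̃^{T_A}‖₁ − 1)/2` equals `(Σ_{k≠l} |ρ_{k,l}|)/2`. -/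
theorem traceNorm_ptA_maxCorr {D : ℕ} (ρ : Matrix (Fin D) (Fin D) ℂ)
    (hρ : ρ.PosSemidef) (hρtr : ρ.trace = 1) :
    traceNorm (ptA (maxCorr ρ)) =
        (∑ k, (ρ k k).re) + ∑ k, ∑ l, (if k = l then 0 else ‖ρ k l‖) ∧
    traceNorm (ptA (maxCorr ρ)) =
        1 + ∑ k, ∑ l, (if k = l then 0 else ‖ρ k l‖) ∧
    (traceNorm (ptA (maxCorr ρ)) - 1) / 2 =
        (∑ k, ∑ l, (if k = l then 0 else ‖ρ k l‖)) / 2 := by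
  have htr : traceNorm (ptA (maxCorr ρ)) = ∑ k, ∑ l, ‖ρ k l‖ := by
    rw [ptA_maxCorr, traceNorm_monomial, Fintype.sum_prod_type, Finset.sum_comm]
  have hre : ∑ k, (ρ k k).re = 1 := by
    simpa [trace] using congrArg Complex.re hρtr
  rw [htr, hρ.sum_norm_eq_sum_re_diag_add_offDiag, hre]
  exact ⟨rfl, rfl, by ring⟩
end
end

section
/- Let ρ be a density matrix on ℂ^d ⊗ ℂ^d with marginals ρ_A (entries (ρ_A)_{i,k} = Σ_j ρ_{(i,j),(k,j)}) and ρ_B (entries (ρ_B)_{j,l} = Σ_i ρ_{(i,j),(i,l)}). Then the relative entropy of quantumness of ρ, Q(ρ) = min over product unitaries U ⊗ V of [ H(diag((U⊗V) ρ (U⊗V)†)) − S(ρ) ], is bounded above by the mutual information: Q(ρ) ≤ S(ρ_A) + S(ρ_B) − S(ρ). In particular Q(ρ) ≤ 2·log₂ d. -/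
open Matrix Kronecker BigOperators
open scoped ComplexOrder

noncomputable section

/-- Shannon entropy (base 2) of a finitely supported vector of reals,
with the convention `0 · log₂ 0 = 0`. -/
def shannonEntropy {ι : Type*} [Fintype ι] (q : ι → ℝ) : ℝ :=
  ∑ i, -(q i) * Real.logb 2 (q i)

/-- Von Neumann entropy (base 2): the Shannon entropy of the vector of eigenvalues of
a Hermitian matrix (junk value `0` on non-Hermitian matrices). -/
def vNEntropy {ι : Type*} [Fintype ι] [DecidableEq ι] (M : Matrix ι ι ℂ) : ℝ :=
  if h : M.IsHermitian then shannonEntropy h.eigenvalues else 0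

/-- The set of values `H(diag((U⊗V) ρ (U⊗V)†)) − S(ρ)` over product unitaries `U ⊗ V`;
the relative entropy of quantumness `Q(ρ)` is its minimum (infimum). -/
def reqSet {d : ℕ} (ρ : Matrix (Fin d × Fin d) (Fin d × Fin d) ℂ) : Set ℝ :=
  {x : ℝ | ∃ U ∈ Matrix.unitaryGroup (Fin d) ℂ, ∃ V ∈ Matrix.unitaryGroup (Fin d) ℂ,
    x = shannonEntropy (fun q => (((U ⊗ₖ V) * ρ * (U ⊗ₖ V)ᴴ) q q).re) - vNEntropy ρ}

/-- The relative entropy of quantumness of a bipartite state. -/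
def REQ {d : ℕ} (ρ : Matrix (Fin d × Fin d) (Fin d × Fin d) ℂ) : ℝ :=
  sInf (reqSet ρ)

/-- The marginal on the first factor, `(ρ_A)_{i,k} = Σ_j ρ_{(i,j),(k,j)}`. -/
def margA {d : ℕ} (ρ : Matrix (Fin d × Fin d) (Fin d × Fin d) ℂ) :
    Matrix (Fin d) (Fin d) ℂ :=
  Matrix.of fun i k => ∑ j, ρ (i, j) (k, j)

/-- The marginal on the second factor, `(ρ_B)_{j,l} = Σ_i ρ_{(i,j),(i,l)}`. -/
def margB {d : ℕ} (ρ : Matrix (Fin d × Fin d) (Fin d × Fin d) ℂ) :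
    Matrix (Fin d) (Fin d) ℂ :=
  Matrix.of fun j l => ∑ i, ρ (i, j) (i, l)

/-!
Measure `ρ` in a product basis that diagonalises both marginals: if `U ρ_A U†` and `V ρ_B V†`
are diagonal, the diagonal `p` of `(U ⊗ V) ρ (U ⊗ V)†` is a probability vector whose two
marginals are the spectra of `ρ_A` and `ρ_B`. Subadditivity of the Shannon entropy gives
`H(p) ≤ S(ρ_A) + S(ρ_B)`, and `H(p) ≤ log₂ d²` gives the second bound since `S(ρ) ≥ 0`.
-/

open Real

section Entropy

variable {ι κ : Type*} [Fintype ι] [Fintype κ]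

lemma mul_log_sub_mul_log_le {p q : ℝ} (hp : 0 ≤ p) (hq : 0 ≤ q) (hpq : q = 0 → p = 0) :
    p * log q - p * log p ≤ q - p := by
  rcases hp.eq_or_lt with rfl | hp
  · simpa using hq
  have hq : 0 < q := hq.lt_of_ne fun h => hp.ne' (hpq h.symm)
  have := mul_le_mul_of_nonneg_left (log_le_sub_one_of_pos (div_pos hq hp)) hp.le
  rwa [log_div hq.ne' hp.ne', mul_sub, mul_sub, mul_div_cancel₀ _ hp.ne', mul_one] at this

theorem shannonEntropy_le_sum_neg_mul_logb {p q : ι → ℝ} (hp : p ∈ stdSimplex ℝ ι)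
    (hq : ∀ i, 0 ≤ q i) (hq_sum : ∑ i, q i ≤ 1) (hpq : ∀ i, q i = 0 → p i = 0) :
    shannonEntropy p ≤ ∑ i, -p i * logb 2 (q i) := by
  have hlog : 0 < log 2 := log_pos one_lt_two
  have key : ∑ i, (p i * log (q i) - p i * log (p i)) ≤ 0 :=
    calc ∑ i, (p i * log (q i) - p i * log (p i))
        ≤ ∑ i, (q i - p i) :=
          Finset.sum_le_sum fun i _ => mul_log_sub_mul_log_le (hp.1 i) (hq i) (hpq i)
      _ ≤ 0 := by rw [Finset.sum_sub_distrib, hp.2]; linarith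
  have hdiff : ∑ i, -p i * logb 2 (q i) - shannonEntropy p
      = (∑ i, (p i * log (q i) - p i * log (p i))) / -log 2 := by
    simp only [shannonEntropy, ← Finset.sum_sub_distrib, Finset.sum_div, logb]
    exact Finset.sum_congr rfl fun i _ => by field_simp; ring
  linarith [div_nonneg_of_nonpos key (neg_nonpos.mpr hlog.le)]

theorem shannonEntropy_nonneg {p : ι → ℝ} (hp : p ∈ stdSimplex ℝ ι) : 0 ≤ shannonEntropy p :=
  Finset.sum_nonneg fun i _ => by
    obtain ⟨h0, h1⟩ := mem_Icc_of_mem_stdSimplex hp i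
    nlinarith [logb_nonpos (b := 2) one_lt_two h0 h1]

theorem shannonEntropy_le_logb_card {p : ι → ℝ} (hp : p ∈ stdSimplex ℝ ι) :
    shannonEntropy p ≤ logb 2 (Fintype.card ι) := by
  have hcard : (0 : ℝ) < Fintype.card ι := by
    have : (Finset.univ : Finset ι).Nonempty :=
      Finset.nonempty_of_sum_ne_zero (hp.2 ▸ one_ne_zero)
    exact_mod_cast Finset.card_pos.mpr this
  calc shannonEntropy p ≤ ∑ i, -p i * logb 2 (Fintype.card ι : ℝ)⁻¹ :=
        shannonEntropy_le_sum_neg_mul_logb hp (fun _ => by positivity)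
          (by simp [mul_inv_cancel₀ hcard.ne']) fun _ h => absurd h (by positivity)
    _ = logb 2 (Fintype.card ι) := by
        simp only [logb_inv, neg_mul_neg, ← Finset.sum_mul, hp.2, one_mul]

lemma sum_snd_mem_stdSimplex {p : ι × κ → ℝ} (hp : p ∈ stdSimplex ℝ (ι × κ)) :
    (fun i => ∑ j, p (i, j)) ∈ stdSimplex ℝ ι :=
  ⟨fun _ => Finset.sum_nonneg fun _ _ => hp.1 _, by rw [← Fintype.sum_prod_type, hp.2]⟩

lemma sum_fst_mem_stdSimplex {p : ι × κ → ℝ} (hp : p ∈ stdSimplex ℝ (ι × κ)) :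
    (fun j => ∑ i, p (i, j)) ∈ stdSimplex ℝ κ :=
  ⟨fun _ => Finset.sum_nonneg fun _ _ => hp.1 _, by rw [← Fintype.sum_prod_type_right, hp.2]⟩

lemma sum_prod_neg_mul_logb_fst (p : ι × κ → ℝ) (f : ι → ℝ) :
    ∑ x, -p x * logb 2 (f x.1) = ∑ i, -(∑ j, p (i, j)) * logb 2 (f i) := by
  simp only [Fintype.sum_prod_type, neg_mul, Finset.sum_neg_distrib, Finset.sum_mul]

lemma sum_prod_neg_mul_logb_snd (p : ι × κ → ℝ) (g : κ → ℝ) :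
    ∑ x, -p x * logb 2 (g x.2) = ∑ j, -(∑ i, p (i, j)) * logb 2 (g j) := by
  simp only [Fintype.sum_prod_type_right, neg_mul, Finset.sum_neg_distrib, Finset.sum_mul]

theorem shannonEntropy_le_add_marginals {p : ι × κ → ℝ} (hp : p ∈ stdSimplex ℝ (ι × κ)) :
    shannonEntropy p ≤
      shannonEntropy (fun i => ∑ j, p (i, j)) + shannonEntropy (fun j => ∑ i, p (i, j)) := by
  set a : ι → ℝ := fun i => ∑ j, p (i, j)
  set b : κ → ℝ := fun j => ∑ i, p (i, j)
  have ha : a ∈ stdSimplex ℝ ι := sum_snd_mem_stdSimplex hp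
  have hb : b ∈ stdSimplex ℝ κ := sum_fst_mem_stdSimplex hp
  have hpa (x : ι × κ) : p x ≤ a x.1 :=
    Finset.single_le_sum (f := fun j => p (x.1, j)) (fun _ _ => hp.1 _) (Finset.mem_univ x.2)
  have hpb (x : ι × κ) : p x ≤ b x.2 :=
    Finset.single_le_sum (f := fun i => p (i, x.2)) (fun _ _ => hp.1 _) (Finset.mem_univ x.1)
  have hsupp (x : ι × κ) (h : a x.1 * b x.2 = 0) : p x = 0 := by
    rcases mul_eq_zero.mp h with h | h
    · exact le_antisymm (h ▸ hpa x) (hp.1 x)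
    · exact le_antisymm (h ▸ hpb x) (hp.1 x)
  have hsplit (x : ι × κ) : -p x * logb 2 (a x.1 * b x.2)
      = -p x * logb 2 (a x.1) + -p x * logb 2 (b x.2) := by
    by_cases h : a x.1 * b x.2 = 0
    · simp [hsupp x h]
    · rw [logb_mul (left_ne_zero_of_mul h) (right_ne_zero_of_mul h), mul_add]
  calc shannonEntropy p ≤ ∑ x, -p x * logb 2 (a x.1 * b x.2) :=
        shannonEntropy_le_sum_neg_mul_logb hp (fun x => mul_nonneg (ha.1 _) (hb.1 _))
          (by rw [Fintype.sum_prod_type, ← Fintype.sum_mul_sum, ha.2, hb.2, one_mul]) hsupp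
    _ = shannonEntropy a + shannonEntropy b := by
        simp only [hsplit, Finset.sum_add_distrib, sum_prod_neg_mul_logb_fst,
          sum_prod_neg_mul_logb_snd, shannonEntropy]
        rfl

end Entropy

section Marginals

variable {d : ℕ}

lemma margA_kronecker_mul_mul_kronecker (ρ : Matrix (Fin d × Fin d) (Fin d × Fin d) ℂ)
    (A B C D : Matrix (Fin d) (Fin d) ℂ) (h : D * C = 1) :
    margA ((A ⊗ₖ C) * ρ * (B ⊗ₖ D)) = A * margA ρ * B := by
  ext i k
  calc margA ((A ⊗ₖ C) * ρ * (B ⊗ₖ D)) i k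
      = ∑ y, ∑ x, A i x.1 * ρ x y * B y.1 k * (D * C) y.2 x.2 := by
        simp only [margA, of_apply, mul_apply, kroneckerMap_apply, Finset.sum_mul, Finset.mul_sum]
        rw [Finset.sum_comm]
        refine Fintype.sum_congr _ _ fun y => ?_
        rw [Finset.sum_comm]
        exact Fintype.sum_congr _ _ fun x => Fintype.sum_congr _ _ fun j => by ring
    _ = (A * margA ρ * B) i k := by
        simp only [h, one_apply, mul_ite, mul_one, mul_zero, Fintype.sum_prod_type,
          Finset.sum_ite_eq, Finset.mem_univ, ↓reduceIte]
        simp only [margA, mul_apply, of_apply, Finset.mul_sum, Finset.sum_mul]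
        exact Fintype.sum_congr _ _ fun c => Finset.sum_comm

lemma margB_kronecker_mul_mul_kronecker (ρ : Matrix (Fin d × Fin d) (Fin d × Fin d) ℂ)
    (A B C D : Matrix (Fin d) (Fin d) ℂ) (h : B * A = 1) :
    margB ((A ⊗ₖ C) * ρ * (B ⊗ₖ D)) = C * margB ρ * D := by
  ext j l
  calc margB ((A ⊗ₖ C) * ρ * (B ⊗ₖ D)) j l
      = ∑ y, ∑ x, C j x.2 * ρ x y * D y.2 l * (B * A) y.1 x.1 := by
        simp only [margB, of_apply, mul_apply, kroneckerMap_apply, Finset.sum_mul, Finset.mul_sum]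
        rw [Finset.sum_comm]
        refine Fintype.sum_congr _ _ fun y => ?_
        rw [Finset.sum_comm]
        exact Fintype.sum_congr _ _ fun x => Fintype.sum_congr _ _ fun i => by ring
    _ = (C * margB ρ * D) j l := by
        simp only [h, one_apply, mul_ite, mul_one, mul_zero, Fintype.sum_prod_type]
        simp only [margB, mul_apply, of_apply, Finset.mul_sum, Finset.sum_mul]
        rw [Finset.sum_comm]
        refine Fintype.sum_congr _ _ fun e => ?_
        simp only [Finset.sum_ite_irrel, Finset.sum_const_zero, Finset.sum_ite_eq,
          Finset.mem_univ, ↓reduceIte]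
        exact Finset.sum_comm

lemma margA_isHermitian {ρ : Matrix (Fin d × Fin d) (Fin d × Fin d) ℂ} (hρ : ρ.IsHermitian) :
    (margA ρ).IsHermitian := by
  ext i k
  simp only [conjTranspose_apply, margA, of_apply, star_sum]
  exact Fintype.sum_congr _ _ fun j => hρ.apply _ _

lemma margB_isHermitian {ρ : Matrix (Fin d × Fin d) (Fin d × Fin d) ℂ} (hρ : ρ.IsHermitian) :
    (margB ρ).IsHermitian := by
  ext j l
  simp only [conjTranspose_apply, margB, of_apply, star_sum]
  exact Fintype.sum_congr _ _ fun i => hρ.apply _ _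

end Marginals

section DensityMatrix

variable {n : Type*} [Fintype n] {σ : Matrix n n ℂ}

lemma diag_re_mem_stdSimplex (hσ : σ.PosSemidef) (htr : σ.trace = 1) :
    (fun i => (σ i i).re) ∈ stdSimplex ℝ n :=
  ⟨fun _ => (Complex.nonneg_iff.mp hσ.diag_nonneg).1, by
    rw [← Complex.re_sum]; exact congrArg Complex.re htr⟩

variable [DecidableEq n]

lemma Matrix.PosSemidef.eigenvalues_mem_stdSimplex (hσ : σ.PosSemidef) (htr : σ.trace = 1) :
    hσ.1.eigenvalues ∈ stdSimplex ℝ n :=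
  ⟨hσ.eigenvalues_nonneg, by
    rw [← Complex.ofReal_inj, Complex.ofReal_sum, Complex.ofReal_one, ← htr,
      hσ.1.trace_eq_sum_eigenvalues]
    rfl⟩

lemma vNEntropy_nonneg (hσ : σ.PosSemidef) (htr : σ.trace = 1) : 0 ≤ vNEntropy σ := by
  rw [vNEntropy, dif_pos hσ.1]
  exact shannonEntropy_nonneg (hσ.eigenvalues_mem_stdSimplex htr)

lemma diag_re_unitary_conj_mem_stdSimplex {U : Matrix n n ℂ} (hU : U ∈ unitaryGroup n ℂ)
    (hσ : σ.PosSemidef) (htr : σ.trace = 1) :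
    (fun i => ((U * σ * Uᴴ) i i).re) ∈ stdSimplex ℝ n := by
  refine diag_re_mem_stdSimplex (hσ.mul_mul_conjTranspose_same U) ?_
  rw [trace_mul_cycle, ← star_eq_conjTranspose, mem_unitaryGroup_iff'.mp hU, one_mul, htr]

lemma Matrix.IsHermitian.diag_re_conj_star_eigenvectorUnitary (hσ : σ.IsHermitian) :
    (fun i => ((((star hσ.eigenvectorUnitary : unitaryGroup n ℂ) : Matrix n n ℂ) * σ *
      ((star hσ.eigenvectorUnitary : unitaryGroup n ℂ) : Matrix n n ℂ)ᴴ) i i).re) =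
      hσ.eigenvalues := by
  have h := hσ.conjStarAlgAut_star_eigenvectorUnitary
  rw [Unitary.conjStarAlgAut_apply, star_eq_conjTranspose] at h
  rw [h]
  simp

end DensityMatrix

/-- The outcome distribution of measuring `ρ` in the product basis formed by the columns of
`(U ⊗ V)†`. -/
def conjKroneckerDiag {d : ℕ} (U V : Matrix (Fin d) (Fin d) ℂ)
    (ρ : Matrix (Fin d × Fin d) (Fin d × Fin d) ℂ) : Fin d × Fin d → ℝ :=
  fun q => (((U ⊗ₖ V) * ρ * (U ⊗ₖ V)ᴴ) q q).re

section Quantumness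

variable {d : ℕ} {ρ : Matrix (Fin d × Fin d) (Fin d × Fin d) ℂ} {U V : Matrix (Fin d) (Fin d) ℂ}

lemma conjKroneckerDiag_mem_stdSimplex (hρ : ρ.PosSemidef) (hρtr : ρ.trace = 1)
    (hU : U ∈ unitaryGroup (Fin d) ℂ) (hV : V ∈ unitaryGroup (Fin d) ℂ) :
    conjKroneckerDiag U V ρ ∈ stdSimplex ℝ (Fin d × Fin d) :=
  diag_re_unitary_conj_mem_stdSimplex (kronecker_mem_unitary hU hV) hρ hρtr

lemma reqSet_bddBelow (hρ : ρ.PosSemidef) (hρtr : ρ.trace = 1) : BddBelow (reqSet ρ) := by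
  refine ⟨-vNEntropy ρ, ?_⟩
  rintro _ ⟨U, hU, V, hV, rfl⟩
  show -vNEntropy ρ ≤ shannonEntropy (conjKroneckerDiag U V ρ) - vNEntropy ρ
  linarith [shannonEntropy_nonneg (conjKroneckerDiag_mem_stdSimplex hρ hρtr hU hV)]

lemma REQ_le_shannonEntropy_sub (hρ : ρ.PosSemidef) (hρtr : ρ.trace = 1)
    (hU : U ∈ unitaryGroup (Fin d) ℂ) (hV : V ∈ unitaryGroup (Fin d) ℂ) :
    REQ ρ ≤ shannonEntropy (conjKroneckerDiag U V ρ) - vNEntropy ρ :=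
  csInf_le (reqSet_bddBelow hρ hρtr) ⟨U, hU, V, hV, rfl⟩

lemma sum_snd_conjKroneckerDiag (hV : V ∈ unitaryGroup (Fin d) ℂ) :
    (fun i => ∑ j, conjKroneckerDiag U V ρ (i, j)) = fun i => ((U * margA ρ * Uᴴ) i i).re := by
  simp only [conjKroneckerDiag, conjTranspose_kronecker]
  rw [← margA_kronecker_mul_mul_kronecker ρ U Uᴴ V Vᴴ
    (by rw [← star_eq_conjTranspose]; exact mem_unitaryGroup_iff'.mp hV)]
  simp only [margA, of_apply, Complex.re_sum]

lemma sum_fst_conjKroneckerDiag (hU : U ∈ unitaryGroup (Fin d) ℂ) :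
    (fun j => ∑ i, conjKroneckerDiag U V ρ (i, j)) = fun j => ((V * margB ρ * Vᴴ) j j).re := by
  simp only [conjKroneckerDiag, conjTranspose_kronecker]
  rw [← margB_kronecker_mul_mul_kronecker ρ U Uᴴ V Vᴴ
    (by rw [← star_eq_conjTranspose]; exact mem_unitaryGroup_iff'.mp hU)]
  simp only [margB, of_apply, Complex.re_sum]

end Quantumness

theorem REQ_le_mutualInformation_general {d : ℕ}
    (ρ : Matrix (Fin d × Fin d) (Fin d × Fin d) ℂ)
    (hρ : ρ.PosSemidef) (hρtr : ρ.trace = 1) :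
    REQ ρ ≤ vNEntropy (margA ρ) + vNEntropy (margB ρ) - vNEntropy ρ ∧
    REQ ρ ≤ 2 * Real.logb 2 d := by
  have hA := margA_isHermitian hρ.1
  have hB := margB_isHermitian hρ.1
  set U := star hA.eigenvectorUnitary
  set V := star hB.eigenvectorUnitary
  have hREQ := REQ_le_shannonEntropy_sub hρ hρtr U.2 V.2
  have hp := conjKroneckerDiag_mem_stdSimplex hρ hρtr U.2 V.2
  constructor
  · have hsub := shannonEntropy_le_add_marginals hp
    rw [sum_snd_conjKroneckerDiag V.2, sum_fst_conjKroneckerDiag U.2,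
      hA.diag_re_conj_star_eigenvectorUnitary, hB.diag_re_conj_star_eigenvectorUnitary] at hsub
    rw [vNEntropy, dif_pos hA, vNEntropy, dif_pos hB]
    linarith
  · have hcard := shannonEntropy_le_logb_card hp
    rw [Fintype.card_prod, Fintype.card_fin, Nat.cast_mul, ← sq, logb_pow, Nat.cast_ofNat] at hcard
    linarith [vNEntropy_nonneg hρ hρtr]

/-- The relative entropy of quantumness is bounded above by the quantum mutual
information `S(ρ_A) + S(ρ_B) − S(ρ)`; in particular it is at most `2 log₂ d`. -/
theorem REQ_le_mutualInformation {d : ℕ} (hd : 1 ≤ d)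
    (ρ : Matrix (Fin d × Fin d) (Fin d × Fin d) ℂ)
    (hρ : ρ.PosSemidef) (hρtr : ρ.trace = 1) :
    REQ ρ ≤ vNEntropy (margA ρ) + vNEntropy (margB ρ) - vNEntropy ρ ∧
    REQ ρ ≤ 2 * Real.logb 2 d :=
  REQ_le_mutualInformation_general ρ hρ hρtr
end
end

section
/- Let |ψ⟩ = d^{−1/2} Σ_{j=0}^{d−1} |j⟩|j⟩ be the maximally entangled state on ℂ^d ⊗ ℂ^d and ρ = |ψ⟩⟨ψ|. Then the relative entropy of quantumness of ρ equals log₂ d; in particular, for every pair of unitaries U, V on ℂ^d, the Shannon entropy of the diagonal of (U⊗V) ρ (U⊗V)† is at least log₂ d, with equality achieved (e.g., for U = V = 𝟙). -/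
open Matrix Kronecker BigOperators
open scoped ComplexOrder

noncomputable section

/-- The maximally entangled state vector `|ψ⟩ = d^{−1/2} Σ_j |j⟩|j⟩` on `ℂ^d ⊗ ℂ^d`. -/
def maxEnt (d : ℕ) : Fin d × Fin d → ℂ :=
  fun jk => if jk.1 = jk.2 then (1 / Real.sqrt d : ℝ) else 0

/-!
Since `ψ` is `d^{-1/2}` times the vectorised identity, `(U ⊗ V) ψ` is `d^{-1/2}` times the
vectorised unitary `W = U Vᵀ`, so the product-basis diagonal of `(U⊗V) ρ (U⊗V)†` is the
probability vector `|W_ab|² / d`. Every entry of a unitary has modulus at most `1`, so each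
probability is at most `1/d` and the Shannon entropy is at least `log₂ d`, with equality for
`W = 1`. The state is pure, so `ρ` is a Hermitian idempotent, its eigenvalues lie in `{0, 1}`
and `S(ρ) = 0`.
-/

section Entropy

variable {ι : Type*} [Fintype ι]

theorem logb_le_shannonEntropy_of_le_inv {p : ι → ℝ} {c : ℝ} (hp₀ : ∀ i, 0 ≤ p i)
    (hpc : ∀ i, p i ≤ c⁻¹) (hp₁ : ∑ i, p i = 1) : Real.logb 2 c ≤ shannonEntropy p := by
  have hterm : ∀ i, p i * Real.logb 2 c ≤ -p i * Real.logb 2 (p i) := by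
    intro i
    rcases (hp₀ i).eq_or_lt with hi | hi
    · simp [← hi]
    · have : Real.logb 2 (p i) ≤ -Real.logb 2 c := by
        rw [← Real.logb_inv]
        exact Real.logb_le_logb_of_le one_lt_two hi (hpc i)
      nlinarith
  calc Real.logb 2 c = ∑ i, p i * Real.logb 2 c := by rw [← Finset.sum_mul, hp₁, one_mul]
    _ ≤ shannonEntropy p := Finset.sum_le_sum fun i _ => hterm i

theorem shannonEntropy_eq_zero_of_forall_eq_zero_or_one {p : ι → ℝ}
    (hp : ∀ i, p i = 0 ∨ p i = 1) : shannonEntropy p = 0 :=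
  Finset.sum_eq_zero fun i _ => by rcases hp i with h | h <;> simp [h]

theorem vNEntropy_eq_zero_of_isIdempotentElem [DecidableEq ι] {ρ : Matrix ι ι ℂ}
    (hρ : ρ.IsHermitian) (hρρ : IsIdempotentElem ρ) : vNEntropy ρ = 0 := by
  rw [vNEntropy, dif_pos hρ]
  exact shannonEntropy_eq_zero_of_forall_eq_zero_or_one fun i =>
    hρρ.spectrum_subset ℝ (hρ.eigenvalues_mem_spectrum_real i)

theorem vNEntropy_vecMulVec_star [DecidableEq ι] {x : ι → ℂ} (hx : star x ⬝ᵥ x = 1) :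
    vNEntropy (vecMulVec x (star x)) = 0 := by
  refine vNEntropy_eq_zero_of_isIdempotentElem (posSemidef_vecMulVec_self_star x).isHermitian ?_
  rw [IsIdempotentElem, vecMulVec_mul_vecMulVec, hx, one_smul]

end Entropy

section RankOne

variable {m n : Type*} [Fintype n]

theorem mul_vecMulVec_star_mul_conjTranspose (M : Matrix m n ℂ) (x : n → ℂ) :
    M * vecMulVec x (star x) * Mᴴ = vecMulVec (M *ᵥ x) (star (M *ᵥ x)) := by
  rw [mul_vecMulVec, vecMulVec_mul, star_mulVec]

theorem re_vecMulVec_star_apply_self (y : m → ℂ) (i : m) :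
    (vecMulVec y (star y) i i).re = ‖y i‖ ^ 2 := by
  rw [vecMulVec_apply, Pi.star_apply, Complex.star_def, Complex.mul_conj']
  norm_cast

theorem sum_norm_sq_row_of_mem_unitaryGroup [DecidableEq n] {W : Matrix n n ℂ}
    (hW : W ∈ unitaryGroup n ℂ) (i : n) : ∑ j, ‖W i j‖ ^ 2 = 1 := by
  have h := congrArg (fun M => (M i i).re) (mem_unitaryGroup_iff.mp hW)
  simp only [star_eq_conjTranspose, ← re_vecMulVec_star_apply_self, one_apply_eq,
    Complex.one_re, mul_apply, conjTranspose_apply, Complex.re_sum] at h ⊢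
  exact h

end RankOne

section MaxEnt

variable {d : ℕ}

theorem kronecker_mulVec_maxEnt (U V : Matrix (Fin d) (Fin d) ℂ) (a b : Fin d) :
    ((U ⊗ₖ V) *ᵥ maxEnt d) (a, b) = ((1 / Real.sqrt d : ℝ) : ℂ) * (U * Vᵀ) a b := by
  simp only [mulVec, dotProduct, Fintype.sum_prod_type, kroneckerMap_apply, maxEnt, mul_ite,
    mul_zero, Finset.sum_ite_eq, Finset.mem_univ, if_true, mul_apply, transpose_apply,
    Finset.mul_sum]
  exact Finset.sum_congr rfl fun j _ => by ring

theorem norm_sq_maxEnt_apply (q : Fin d × Fin d) :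
    ‖maxEnt d q‖ ^ 2 = if q.1 = q.2 then (d : ℝ)⁻¹ else 0 := by
  unfold maxEnt
  split_ifs <;> simp

theorem sum_norm_sq_maxEnt (hd : 1 ≤ d) : ∑ q, ‖maxEnt d q‖ ^ 2 = 1 := by
  simp only [norm_sq_maxEnt_apply, Fintype.sum_prod_type, Finset.sum_ite_eq, Finset.mem_univ,
    if_true, Finset.sum_const, Finset.card_univ, Fintype.card_fin, nsmul_eq_mul]
  field_simp

theorem star_maxEnt_dotProduct (hd : 1 ≤ d) : star (maxEnt d) ⬝ᵥ maxEnt d = 1 := by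
  simp only [dotProduct, Pi.star_apply, Complex.star_def, Complex.conj_mul']
  exact_mod_cast sum_norm_sq_maxEnt hd

theorem re_conj_maxEnt_apply_self (U V : Matrix (Fin d) (Fin d) ℂ) (a b : Fin d) :
    (((U ⊗ₖ V) * vecMulVec (maxEnt d) (star (maxEnt d)) * (U ⊗ₖ V)ᴴ) (a, b) (a, b)).re =
      ‖(U * Vᵀ) a b‖ ^ 2 / d := by
  rw [mul_vecMulVec_star_mul_conjTranspose, re_vecMulVec_star_apply_self,
    kronecker_mulVec_maxEnt, norm_mul, mul_pow, Complex.norm_real, Real.norm_eq_abs, sq_abs,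
    div_pow, Real.sq_sqrt d.cast_nonneg]
  ring

theorem logb_le_shannonEntropy_conj_maxEnt (hd : 1 ≤ d) {U V : Matrix (Fin d) (Fin d) ℂ}
    (hU : U ∈ unitaryGroup (Fin d) ℂ) (hV : V ∈ unitaryGroup (Fin d) ℂ) :
    Real.logb 2 d ≤ shannonEntropy (fun q =>
      (((U ⊗ₖ V) * vecMulVec (maxEnt d) (star (maxEnt d)) * (U ⊗ₖ V)ᴴ) q q).re) := by
  have hW : U * Vᵀ ∈ unitaryGroup (Fin d) ℂ :=
    Submonoid.mul_mem _ hU (transpose_mem_unitaryGroup_iff.mpr hV)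
  refine logb_le_shannonEntropy_of_le_inv (fun _ => ?_) (fun ⟨a, b⟩ => ?_) ?_
  · rw [re_conj_maxEnt_apply_self]
    positivity
  · rw [re_conj_maxEnt_apply_self, ← one_div]
    gcongr
    exact pow_le_one₀ (norm_nonneg _) (entry_norm_bound_of_unitary hW a b)
  · have hd₀ : (d : ℝ) ≠ 0 := by positivity
    simp only [Fintype.sum_prod_type, re_conj_maxEnt_apply_self, ← Finset.sum_div,
      sum_norm_sq_row_of_mem_unitaryGroup hW, Finset.sum_const, Finset.card_univ,
      Fintype.card_fin, nsmul_eq_mul]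
    field_simp

theorem shannonEntropy_diag_maxEnt (hd : 1 ≤ d) :
    shannonEntropy (fun q => (vecMulVec (maxEnt d) (star (maxEnt d)) q q).re) = Real.logb 2 d := by
  simp only [shannonEntropy, re_vecMulVec_star_apply_self, norm_sq_maxEnt_apply,
    Fintype.sum_prod_type, apply_ite (fun x : ℝ => -x * Real.logb 2 x), Real.logb_inv,
    neg_zero, zero_mul, Finset.sum_ite_eq, Finset.mem_univ, if_true, Finset.sum_const,
    Finset.card_univ, Fintype.card_fin, nsmul_eq_mul]
  have hd₀ : (d : ℝ) ≠ 0 := by positivity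
  field_simp

end MaxEnt

/-- For the maximally entangled state `ρ = |ψ⟩⟨ψ|`, the relative entropy of quantumness
equals `log₂ d`: every product-basis diagonal of `(U⊗V) ρ (U⊗V)†` has Shannon entropy at
least `log₂ d`, with equality attained at `U = V = 𝟙`. -/
theorem REQ_maxEnt {d : ℕ} (hd : 1 ≤ d) :
    REQ (vecMulVec (maxEnt d) (star (maxEnt d))) = Real.logb 2 d ∧
    (∀ U ∈ Matrix.unitaryGroup (Fin d) ℂ, ∀ V ∈ Matrix.unitaryGroup (Fin d) ℂ,
      Real.logb 2 d ≤
        shannonEntropy (fun q =>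
          (((U ⊗ₖ V) * vecMulVec (maxEnt d) (star (maxEnt d)) * (U ⊗ₖ V)ᴴ) q q).re)) ∧
    shannonEntropy (fun q => ((vecMulVec (maxEnt d) (star (maxEnt d))) q q).re) =
      Real.logb 2 d := by
  have hvN : vNEntropy (vecMulVec (maxEnt d) (star (maxEnt d))) = 0 :=
    vNEntropy_vecMulVec_star (star_maxEnt_dotProduct hd)
  have hleast : IsLeast (reqSet (vecMulVec (maxEnt d) (star (maxEnt d)))) (Real.logb 2 d) := by
    refine ⟨⟨1, one_mem _, 1, one_mem _, ?_⟩, ?_⟩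
    · simp only [one_kronecker_one, one_mul, conjTranspose_one, mul_one, hvN, sub_zero,
        shannonEntropy_diag_maxEnt hd]
    · rintro _ ⟨U, hU, V, hV, rfl⟩
      rw [hvN, sub_zero]
      exact logb_le_shannonEntropy_conj_maxEnt hd hU hV
  exact ⟨hleast.csInf_eq, fun U hU V hV => logb_le_shannonEntropy_conj_maxEnt hd hU hV,
    shannonEntropy_diag_maxEnt hd⟩
end
end

section
/- There exists a constant c′ > 0 such that for every d ≥ 1 and every δ with 0 < δ ≤ 1, the unitary group U(d) of d × d complex unitary matrices, equipped with the operator-norm distance, admits a δ-net of cardinality at most (c′ · d^{3/2} / δ)^{2d²}; that is, there exists a finite set F ⊆ U(d) with |F| ≤ (c′ · d^{3/2} / δ)^{2d²} such that for every U ∈ U(d) there is V ∈ F with ‖U − V‖ ≤ δ. -/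
/-!
Round every entry of a unitary matrix to a grid of mesh `δ / (2d)` in the unit disc. The Frobenius
norm bounds the operator norm, so the rounded matrices form a `δ / 2`-net of `U(d)` of size
`O(d / δ) ^ (2 d²)`; replacing each grid matrix by a unitary within `δ / 2` of it, when there is
one, gives a `δ`-net inside `U(d)` of no larger size.
-/

open Matrix BigOperators

noncomputable section

/-- The `ℓ²→ℓ²` operator norm (largest singular value) of a square complex matrix. -/
def opNorm {m : Type*} [Fintype m] [DecidableEq m] (M : Matrix m m ℂ) : ℝ :=
  ‖(Matrix.toEuclideanCLM (𝕜 := ℂ) M : EuclideanSpace ℂ m →L[ℂ] EuclideanSpace ℂ m)‖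

open scoped Matrix.Norms.L2Operator NNReal

lemma exists_finset_real_net {ε : ℝ} (hε : 0 < ε) :
    ∃ G : Finset ℝ, (G.card : ℝ) ≤ 2 / ε + 3 ∧ ∀ x : ℝ, |x| ≤ 1 → ∃ g ∈ G, |x - g| ≤ ε / 2 := by
  set n : ℕ := ⌈1 / ε⌉₊
  refine ⟨(Finset.Icc (-n : ℤ) n).image fun k : ℤ => k * ε, ?_, fun x hx => ?_⟩
  · have hcard : (Finset.Icc (-n : ℤ) n).card = 2 * n + 1 := by rw [Int.card_Icc]; omega
    have hn : (n : ℝ) < 1 / ε + 1 := Nat.ceil_lt_add_one (by positivity)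
    calc ((Finset.Icc (-n : ℤ) n).image fun k : ℤ => k * ε).card
        ≤ ((Finset.Icc (-n : ℤ) n).card : ℝ) := by exact_mod_cast Finset.card_image_le
      _ = 2 * n + 1 := by rw [hcard]; push_cast; ring
      _ ≤ 2 / ε + 3 := by linarith [show 2 / ε = 2 * (1 / ε) by ring]
  · set k := round (x / ε)
    have hround : |x / ε - k| ≤ 1 / 2 := abs_sub_round _
    have hxε : |x / ε| ≤ n := by
      rw [abs_div, abs_of_pos hε]
      exact (div_le_div_of_nonneg_right hx hε.le).trans (Nat.le_ceil _)
    have hk : |(k : ℝ)| < n + 1 := by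
      rw [abs_le] at hround hxε
      rw [abs_lt]; constructor <;> linarith
    have hk' : |k| < n + 1 := by exact_mod_cast hk
    refine ⟨k * ε, Finset.mem_image_of_mem _ (Finset.mem_Icc.2 ?_), ?_⟩
    · rw [abs_lt] at hk'; omega
    · rw [show x - k * ε = (x / ε - k) * ε by field_simp, abs_mul, abs_of_pos hε]
      nlinarith

lemma exists_finset_complex_net {ε : ℝ} (hε : 0 < ε) :
    ∃ G : Finset ℂ, (G.card : ℝ) ≤ (2 / ε + 3) ^ 2 ∧ ∀ z : ℂ, ‖z‖ ≤ 1 → ∃ g ∈ G, ‖z - g‖ ≤ ε := by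
  obtain ⟨G, hGcard, hG⟩ := exists_finset_real_net hε
  refine ⟨(G ×ˢ G).image fun p => ⟨p.1, p.2⟩, ?_, fun z hz => ?_⟩
  · calc (((G ×ˢ G).image fun p : ℝ × ℝ => (⟨p.1, p.2⟩ : ℂ)).card : ℝ)
        ≤ ((G ×ˢ G).card : ℝ) := by exact_mod_cast Finset.card_image_le
      _ = G.card ^ 2 := by rw [Finset.card_product]; push_cast; ring
      _ ≤ (2 / ε + 3) ^ 2 := by gcongr
  · obtain ⟨a, ha, hza⟩ := hG z.re ((Complex.abs_re_le_norm z).trans hz)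
    obtain ⟨b, hb, hzb⟩ := hG z.im ((Complex.abs_im_le_norm z).trans hz)
    refine ⟨⟨a, b⟩, Finset.mem_image.2 ⟨(a, b), Finset.mem_product.2 ⟨ha, hb⟩, rfl⟩, ?_⟩
    calc ‖z - ⟨a, b⟩‖ ≤ |z.re - a| + |z.im - b| := by
          simpa using Complex.norm_le_abs_re_add_abs_im (z - ⟨a, b⟩)
      _ ≤ ε := by linarith

lemma Matrix.exists_finset_entrywise_net (m n : Type*) [Fintype m] [Fintype n] [DecidableEq m]
    [DecidableEq n] {ε : ℝ} (hε : 0 < ε) :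
    ∃ N : Finset (Matrix m n ℂ),
      (N.card : ℝ) ≤ (2 / ε + 3) ^ (2 * (Fintype.card m * Fintype.card n)) ∧
      ∀ A : Matrix m n ℂ, (∀ i j, ‖A i j‖ ≤ 1) → ∃ B ∈ N, ∀ i j, ‖A i j - B i j‖ ≤ ε := by
  obtain ⟨G, hGcard, hG⟩ := exists_finset_complex_net hε
  refine ⟨Fintype.piFinset fun _ => Fintype.piFinset fun _ => G, ?_, fun A hA => ?_⟩
  · change ((Fintype.piFinset fun _ : m => Fintype.piFinset fun _ : n => G).card : ℝ) ≤ _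
    simp only [Fintype.card_piFinset, Finset.prod_const, Finset.card_univ]
    push_cast
    rw [← pow_mul, pow_mul _ 2, mul_comm (Fintype.card n)]
    gcongr
  · choose B hBG hB using fun i j => hG (A i j) (hA i j)
    exact ⟨B, Fintype.mem_piFinset.2 fun i => Fintype.mem_piFinset.2 (hBG i), hB⟩

namespace Matrix

variable {𝕜 m n : Type*} [RCLike 𝕜] [Fintype m] [Fintype n] [DecidableEq n]

lemma l2_opNorm_le_sqrt_sum_sq (A : Matrix m n 𝕜) : ‖A‖ ≤ √(∑ i, ∑ j, ‖A i j‖ ^ 2) := by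
  rw [l2_opNorm_def]
  refine ContinuousLinearMap.opNorm_le_bound _ (Real.sqrt_nonneg _) fun x => ?_
  have hrow : ∀ i, ‖(A *ᵥ x.ofLp) i‖ ^ 2 ≤ (∑ j, ‖A i j‖ ^ 2) * ‖x‖ ^ 2 := fun i => by
    rw [EuclideanSpace.norm_sq_eq]
    calc ‖∑ j, A i j * x j‖ ^ 2 ≤ (∑ j, ‖A i j‖ * ‖x j‖) ^ 2 := by
          gcongr; exact (norm_sum_le _ _).trans_eq (by simp only [norm_mul])
      _ ≤ _ := Finset.sum_mul_sq_le_sq_mul_sq _ _ _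
  rw [← Real.sqrt_sq (norm_nonneg x), ← Real.sqrt_mul (by positivity),
    ← Real.sqrt_sq (norm_nonneg (_ : EuclideanSpace 𝕜 m))]
  refine Real.sqrt_le_sqrt ?_
  rw [EuclideanSpace.norm_sq_eq, Finset.sum_mul]
  exact Finset.sum_le_sum fun i _ => hrow i

lemma l2_opNorm_le_of_forall_norm_le {A : Matrix m n 𝕜} {ε : ℝ} (hε : 0 ≤ ε)
    (hA : ∀ i j, ‖A i j‖ ≤ ε) : ‖A‖ ≤ √(Fintype.card m * Fintype.card n) * ε := by
  refine (l2_opNorm_le_sqrt_sum_sq A).trans ?_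
  rw [← Real.sqrt_sq hε, ← Real.sqrt_mul (by positivity)]
  refine Real.sqrt_le_sqrt ?_
  calc ∑ i, ∑ j, ‖A i j‖ ^ 2 ≤ ∑ _i : m, ∑ _j : n, ε ^ 2 := by
        gcongr with i _ j _
        exact hA i j
    _ = _ := by simp [Finset.card_univ, mul_assoc]

end Matrix

lemma Metric.exists_finset_subset_dist_le_two_mul {X : Type*} [PseudoMetricSpace X] {s : Set X}
    (N : Finset X) {ε : ℝ} (hε : 0 ≤ ε) (hN : ∀ x ∈ s, ∃ y ∈ N, dist x y ≤ ε) :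
    ∃ F : Finset X, ↑F ⊆ s ∧ F.card ≤ N.card ∧ ∀ x ∈ s, ∃ y ∈ F, dist x y ≤ 2 * ε := by
  lift ε to ℝ≥0 using hε
  have hcover : IsCover ε s N := by
    rw [isCover_iff_subset_iUnion_closedBall]
    intro x hx
    obtain ⟨y, hy, hxy⟩ := hN x hx
    exact Set.mem_biUnion hy (Metric.mem_closedBall.2 hxy)
  have hle : coveringNumber (2 * ε) s ≤ N.card :=
    (coveringNumber_two_mul_le_externalCoveringNumber ε s).trans
      (by simpa using hcover.externalCoveringNumber_le_encard)
  obtain ⟨C, hCs, hCfin, hC, hCcard⟩ :=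
    exists_set_encard_eq_coveringNumber (hle.trans_lt (ENat.natCast_lt_top _)).ne
  refine ⟨hCfin.toFinset, by simpa using hCs, ?_, fun x hx => ?_⟩
  · rw [← ENat.natCast_le_natCast, ← Set.encard_coe_eq_coe_finsetCard, hCfin.coe_toFinset, hCcard]
    exact hle
  · obtain ⟨y, hy, hxy⟩ := Set.mem_iUnion₂.1 (isCover_iff_subset_iUnion_closedBall.1 hC hx)
    exact ⟨y, hCfin.mem_toFinset.2 hy, by simpa using hxy⟩

lemma opNorm_sub_eq_dist {m : Type*} [Fintype m] [DecidableEq m] (A B : Matrix m m ℂ) :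
    opNorm (A - B) = dist A B :=
  (dist_eq_norm A B).symm

lemma Matrix.exists_finset_dist_unitaryGroup_le (n : Type*) [Fintype n] [DecidableEq n]
    [Nonempty n] {δ : ℝ} (hδ : 0 < δ) :
    ∃ N : Finset (Matrix n n ℂ),
      (N.card : ℝ) ≤ (4 * Fintype.card n / δ + 3) ^ (2 * Fintype.card n ^ 2) ∧
      ∀ U ∈ unitaryGroup n ℂ, ∃ V ∈ N, dist U V ≤ δ / 2 := by
  set d : ℝ := (Fintype.card n : ℝ)
  have hd : 0 < d := Nat.cast_pos.2 Fintype.card_pos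
  have hε : 0 < δ / (2 * d) := by positivity
  obtain ⟨N, hNcard, hN⟩ := exists_finset_entrywise_net n n hε
  refine ⟨N, ?_, fun U hU => ?_⟩
  · rw [sq, show 4 * d / δ = 2 / (δ / (2 * d)) by field_simp; ring]
    exact hNcard
  · obtain ⟨V, hVN, hUV⟩ := hN U (entry_norm_bound_of_unitary hU)
    refine ⟨V, hVN, ?_⟩
    rw [dist_eq_norm]
    refine (l2_opNorm_le_of_forall_norm_le hε.le hUV).trans_eq ?_
    rw [Real.sqrt_mul_self (Nat.cast_nonneg _)]
    change d * (δ / (2 * d)) = δ / 2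
    field_simp

lemma four_mul_div_add_three_le {d δ : ℝ} (hd : 1 ≤ d) (hδ : 0 < δ) (hδ1 : δ ≤ 1) :
    4 * d / δ + 3 ≤ 7 * d ^ ((3 : ℝ) / 2) / δ := by
  have hd_le : d ≤ d ^ ((3 : ℝ) / 2) := by
    simpa using Real.rpow_le_rpow_of_exponent_le hd (show (1 : ℝ) ≤ 3 / 2 by norm_num)
  have h3 : 3 ≤ 3 * d / δ := by rw [le_div_iff₀ hδ]; nlinarith
  calc 4 * d / δ + 3 ≤ 7 * d / δ := by
        rw [show 7 * d / δ = 4 * d / δ + 3 * d / δ by ring]; linarith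
    _ ≤ 7 * d ^ ((3 : ℝ) / 2) / δ := by gcongr

/-- There is a universal constant `c′ > 0` such that for all `d ≥ 1` and `0 < δ ≤ 1`,
the unitary group `U(d)` (with operator-norm distance) admits a `δ`-net of cardinality
at most `(c′ d^{3/2} / δ)^{2d²}`. -/
theorem unitaryGroup_net :
    ∃ c' : ℝ, 0 < c' ∧
      ∀ d : ℕ, 1 ≤ d → ∀ δ : ℝ, 0 < δ → δ ≤ 1 →
        ∃ F : Finset (Matrix (Fin d) (Fin d) ℂ),
          (∀ V ∈ F, V ∈ Matrix.unitaryGroup (Fin d) ℂ) ∧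
          (F.card : ℝ) ≤ (c' * (d : ℝ) ^ ((3 : ℝ) / 2) / δ) ^ (2 * d ^ 2) ∧
          ∀ U ∈ Matrix.unitaryGroup (Fin d) ℂ, ∃ V ∈ F, opNorm (U - V) ≤ δ := by
  refine ⟨7, by norm_num, fun d hd δ hδ hδ1 => ?_⟩
  have : Nonempty (Fin d) := ⟨⟨0, hd⟩⟩
  obtain ⟨N, hNcard, hN⟩ := exists_finset_dist_unitaryGroup_le (Fin d) hδ
  obtain ⟨F, hFU, hFcard, hF⟩ :=
    Metric.exists_finset_subset_dist_le_two_mul N (by positivity) hN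
  refine ⟨F, fun V hV => hFU hV, ?_, fun U hU => ?_⟩
  · calc (F.card : ℝ) ≤ N.card := by exact_mod_cast hFcard
      _ ≤ (4 * d / δ + 3) ^ (2 * d ^ 2) := by simpa using hNcard
      _ ≤ (7 * (d : ℝ) ^ ((3 : ℝ) / 2) / δ) ^ (2 * d ^ 2) := by
          gcongr; exact four_mul_div_add_three_le (by exact_mod_cast hd) hδ hδ1
  · obtain ⟨V, hVF, hUV⟩ := hF U hU
    exact ⟨V, hVF, by rw [opNorm_sub_eq_dist]; linarith⟩
end
end

section
/- Let (b_i)_{i=1}^d be an orthonormal basis of ℂ^d, let (b'_i)_{i=1}^d be unit vectors with ‖b'_i − b_i‖₂ ≤ η for all i, and assume 2dη ≤ 1/2. Then the family (b'_i) is linearly independent, B = Σ_{i=1}^d |b'_i⟩⟨b'_i| is positive definite, and the orthonormalized vectors b''_i = B^{−1/2} b'_i satisfy ‖b''_i − b_i‖₂ ≤ (4d + 1)η for all i. -/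
open Matrix BigOperators
open scoped ComplexOrder

noncomputable section

/-- The Euclidean (`ℓ²`) norm of a vector in `ℂ^d`. -/
def l2norm {m : Type*} [Fintype m] (v : m → ℂ) : ℝ :=
  Real.sqrt (∑ k, ‖v k‖ ^ 2)

/-- `B = Σᵢ |b'ᵢ⟩⟨b'ᵢ|`. -/
def gram {d : ℕ} (b' : Fin d → Fin d → ℂ) : Matrix (Fin d) (Fin d) ℂ :=
  ∑ i, vecMulVec (b' i) (star (b' i))

-- `B^{−1/2}`: the inverse of the positive semidefinite square root of `B`
-- (junk value `1` on non-positive-semidefinite matrices).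
open Classical in
def invSqrt {m : Type*} [Fintype m] [DecidableEq m] (B : Matrix m m ℂ) : Matrix m m ℂ :=
  if h : B.PosSemidef then
    ((h.1.eigenvectorUnitary : Matrix m m ℂ) * diagonal ((↑) ∘ (Real.sqrt ·) ∘ h.1.eigenvalues) *
      (star h.1.eigenvectorUnitary : Matrix m m ℂ))⁻¹ else 1

/-!
Let `Q x = ∑ᵢ |⟨b'ᵢ, x⟩|²` be the quadratic form of `B`. By Parseval `‖x‖² = ∑ᵢ |⟨bᵢ, x⟩|²`, and
since all vectors involved are unit vectors the `i`-th terms differ by at most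
`|⟨b'ᵢ - bᵢ, x⟩| (|⟨b'ᵢ, x⟩| + |⟨bᵢ, x⟩|) ≤ 2η‖x‖²`. Hence `|Q x - ‖x‖²| ≤ 2dη‖x‖²`, so every
eigenvalue `λ` of `B` satisfies `|λ - 1| ≤ 2dη ≤ 1/2`: `B` is positive definite, and the `b'ᵢ`
are independent because `B = N Nᴴ` with `N` the matrix of columns `b'ᵢ`. For such `λ`,
`|λ^{-1/2} - 1| ≤ |λ - 1|`, so `B^{-1/2} - 1 = f(B)` with `f t = t^{-1/2} - 1` has norm at most
`2dη`, and `‖b''ᵢ - bᵢ‖ ≤ ‖(B^{-1/2} - 1) b'ᵢ‖ + ‖b'ᵢ - bᵢ‖ ≤ 2dη + η`.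
-/

section l2norm

variable {m : Type*} [Fintype m]

lemma l2norm_eq_norm_toLp (v : m → ℂ) : l2norm v = ‖WithLp.toLp 2 v‖ :=
  (EuclideanSpace.norm_eq _).symm

lemma l2norm_nonneg (v : m → ℂ) : 0 ≤ l2norm v := Real.sqrt_nonneg _

lemma l2norm_add_le (u v : m → ℂ) : l2norm (u + v) ≤ l2norm u + l2norm v := by
  simpa only [l2norm_eq_norm_toLp, WithLp.toLp_add] using norm_add_le _ _

lemma star_dotProduct_self (v : m → ℂ) : star v ⬝ᵥ v = ((l2norm v ^ 2 : ℝ) : ℂ) := by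
  rw [l2norm_eq_norm_toLp, dotProduct_comm, ← EuclideanSpace.inner_toLp_toLp,
    inner_self_eq_norm_sq_to_K]
  push_cast; rfl

lemma norm_star_dotProduct_le (u v : m → ℂ) : ‖star u ⬝ᵥ v‖ ≤ l2norm u * l2norm v := by
  rw [l2norm_eq_norm_toLp, l2norm_eq_norm_toLp, dotProduct_comm,
    ← EuclideanSpace.inner_toLp_toLp]
  exact norm_inner_le_norm _ _

lemma l2norm_unitary_mulVec [DecidableEq m] {U : Matrix m m ℂ} (hU : U ∈ unitaryGroup m ℂ)
    (v : m → ℂ) : l2norm (U *ᵥ v) = l2norm v := by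
  have h : star (U *ᵥ v) ⬝ᵥ (U *ᵥ v) = star v ⬝ᵥ v := by
    rw [star_mulVec, dotProduct_mulVec, vecMul_vecMul, ← star_eq_conjTranspose,
      Unitary.star_mul_self_of_mem hU, vecMul_one]
  rw [star_dotProduct_self, star_dotProduct_self] at h
  exact (pow_left_inj₀ (l2norm_nonneg _) (l2norm_nonneg _) two_ne_zero).mp
    (Complex.ofReal_injective h)

lemma l2norm_diagonal_mulVec_le [DecidableEq m] {g : m → ℂ} {c : ℝ} (hc : 0 ≤ c)
    (hg : ∀ k, ‖g k‖ ≤ c) (v : m → ℂ) : l2norm (diagonal g *ᵥ v) ≤ c * l2norm v := by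
  rw [l2norm, l2norm, ← Real.sqrt_sq hc, ← Real.sqrt_mul (sq_nonneg c), Finset.mul_sum]
  refine Real.sqrt_le_sqrt (Finset.sum_le_sum fun k _ => ?_)
  rw [mulVec_diagonal, norm_mul, mul_pow]
  gcongr
  exact hg k

end l2norm

lemma abs_norm_sq_sub_norm_sq_le {E : Type*} [SeminormedAddCommGroup E] (a c : E) :
    |‖a‖ ^ 2 - ‖c‖ ^ 2| ≤ ‖a - c‖ * (‖a‖ + ‖c‖) := by
  rw [sq_sub_sq, abs_mul, abs_of_nonneg (by positivity), mul_comm]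
  exact mul_le_mul_of_nonneg_right (abs_norm_sub_norm_le a c) (by positivity)

lemma abs_inv_sqrt_sub_one_le {t ε : ℝ} (hε : ε ≤ 1 / 2) (ht : |t - 1| ≤ ε) :
    |(√t)⁻¹ - 1| ≤ ε := by
  have ht_half : 1 / 2 ≤ t := by linarith [neg_abs_le (t - 1)]
  have hs : 7 / 10 ≤ √t := Real.le_sqrt_of_sq_le (by linarith)
  have hsq : √t ^ 2 = t := Real.sq_sqrt (by linarith)
  have hkey : (√t)⁻¹ - 1 = (1 - t) / (√t * (1 + √t)) := by
    field_simp
    nlinarith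
  have hden : 1 ≤ √t * (1 + √t) := by nlinarith
  rw [hkey, abs_div, abs_sub_comm 1 t, abs_of_pos (a := √t * (1 + √t)) (by linarith)]
  exact (div_le_self (abs_nonneg _) hden).trans ht

section orthonormal

variable {ι m : Type*} [Fintype m] {b : ι → m → ℂ}

lemma orthonormal_toLp_of_star_dotProduct [DecidableEq ι]
    (hb : ∀ i j, star (b i) ⬝ᵥ b j = if i = j then 1 else 0) :
    Orthonormal ℂ fun i => WithLp.toLp 2 (b i) :=
  orthonormal_iff_ite.mpr fun i j => by rw [EuclideanSpace.inner_toLp_toLp, dotProduct_comm, hb]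

lemma sum_norm_star_dotProduct_sq [Fintype ι] (hb : Orthonormal ℂ fun i => WithLp.toLp 2 (b i))
    (hcard : Fintype.card ι = Fintype.card m) (x : m → ℂ) :
    ∑ i, ‖star (b i) ⬝ᵥ x‖ ^ 2 = l2norm x ^ 2 := by
  have hspan := hb.linearIndependent.span_eq_top_of_card_eq_finrank'
    (by rw [finrank_euclideanSpace, hcard])
  have := (OrthonormalBasis.mk hb hspan.ge).sum_sq_norm_inner_right (WithLp.toLp 2 x)
  simpa [EuclideanSpace.inner_toLp_toLp, dotProduct_comm, ← l2norm_eq_norm_toLp] using this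

end orthonormal

lemma abs_sum_norm_star_dotProduct_sq_sub_le {ι m : Type*} [Fintype ι] [Fintype m]
    {b b' : ι → m → ℂ} {η : ℝ} (hb : ∀ i, l2norm (b i) ≤ 1) (hb' : ∀ i, l2norm (b' i) ≤ 1)
    (hclose : ∀ i, l2norm (b' i - b i) ≤ η) (x : m → ℂ) :
    |∑ i, ‖star (b' i) ⬝ᵥ x‖ ^ 2 - ∑ i, ‖star (b i) ⬝ᵥ x‖ ^ 2| ≤
      2 * Fintype.card ι * η * l2norm x ^ 2 := by
  have hunit : ∀ u : m → ℂ, l2norm u ≤ 1 → ‖star u ⬝ᵥ x‖ ≤ l2norm x := fun u hu =>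
    (norm_star_dotProduct_le u x).trans (mul_le_of_le_one_left (l2norm_nonneg x) hu)
  have hterm : ∀ i, |‖star (b' i) ⬝ᵥ x‖ ^ 2 - ‖star (b i) ⬝ᵥ x‖ ^ 2| ≤ 2 * η * l2norm x ^ 2 := by
    intro i
    have hdiff : ‖star (b' i) ⬝ᵥ x - star (b i) ⬝ᵥ x‖ ≤ η * l2norm x := by
      rw [← sub_dotProduct, ← star_sub]
      exact (norm_star_dotProduct_le _ _).trans
        (mul_le_mul_of_nonneg_right (hclose i) (l2norm_nonneg x))
    calc _ ≤ ‖star (b' i) ⬝ᵥ x - star (b i) ⬝ᵥ x‖ * (‖star (b' i) ⬝ᵥ x‖ + ‖star (b i) ⬝ᵥ x‖) :=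
          abs_norm_sq_sub_norm_sq_le _ _
      _ ≤ η * l2norm x * (l2norm x + l2norm x) :=
          mul_le_mul hdiff (add_le_add (hunit _ (hb' i)) (hunit _ (hb i))) (by positivity)
            ((norm_nonneg _).trans hdiff)
      _ = 2 * η * l2norm x ^ 2 := by ring
  calc _ = |∑ i, (‖star (b' i) ⬝ᵥ x‖ ^ 2 - ‖star (b i) ⬝ᵥ x‖ ^ 2)| := by
        rw [Finset.sum_sub_distrib]
    _ ≤ ∑ i, |‖star (b' i) ⬝ᵥ x‖ ^ 2 - ‖star (b i) ⬝ᵥ x‖ ^ 2| := Finset.abs_sum_le_sum_abs _ _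
    _ ≤ ∑ _i : ι, 2 * η * l2norm x ^ 2 := Finset.sum_le_sum fun i _ => hterm i
    _ = 2 * Fintype.card ι * η * l2norm x ^ 2 := by
        rw [Finset.sum_const, Finset.card_univ, nsmul_eq_mul]; ring

section gram

variable {d : ℕ} (b' : Fin d → Fin d → ℂ)

lemma gram_isHermitian : (gram b').IsHermitian := by
  simp only [IsHermitian, _root_.gram, conjTranspose_sum, conjTranspose_vecMulVec, star_star]

lemma re_star_dotProduct_gram_mulVec (x : Fin d → ℂ) :
    RCLike.re (star x ⬝ᵥ (gram b' *ᵥ x)) = ∑ i, ‖star (b' i) ⬝ᵥ x‖ ^ 2 := by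
  have h : ∀ i, star x ⬝ᵥ (vecMulVec (b' i) (star (b' i)) *ᵥ x) = (‖star (b' i) ⬝ᵥ x‖ ^ 2 : ℝ) := by
    intro i
    rw [vecMulVec_mulVec, op_smul_eq_smul, dotProduct_smul, smul_eq_mul, star_dotProduct,
      norm_star, Complex.star_def, mul_comm, Complex.mul_conj', Complex.ofReal_pow]
  simp only [_root_.gram, sum_mulVec, dotProduct_sum, h, map_sum]
  exact Finset.sum_congr rfl fun i _ => Complex.ofReal_re _

lemma gram_eq_mul_conjTranspose : gram b' = (of b')ᵀ * (of b')ᵀᴴ := by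
  ext j k
  simp [_root_.gram, mul_apply, Matrix.sum_apply, vecMulVec_apply]

variable {b'}

lemma linearIndependent_of_gram_posDef (h : (gram b').PosDef) : LinearIndependent ℂ b' := by
  have hdet := (isUnit_iff_isUnit_det _).mp h.isUnit
  rw [gram_eq_mul_conjTranspose, det_mul] at hdet
  exact linearIndependent_rows_iff_isUnit.mpr
    ((isUnit_transpose _).mp ((isUnit_iff_isUnit_det _).mpr (isUnit_of_mul_isUnit_left hdet)))

end gram

section spectral

variable {m : Type*} [Fintype m] [DecidableEq m] {A : Matrix m m ℂ}

lemma abs_eigenvalues_sub_one_le (hA : A.IsHermitian) {ε : ℝ}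
    (h : ∀ x, |RCLike.re (star x ⬝ᵥ (A *ᵥ x)) - l2norm x ^ 2| ≤ ε * l2norm x ^ 2) (i : m) :
    |hA.eigenvalues i - 1| ≤ ε := by
  have hunit : l2norm ⇑(hA.eigenvectorBasis i) = 1 := by
    rw [l2norm_eq_norm_toLp]; exact hA.eigenvectorBasis.orthonormal.1 i
  simpa [hunit, hA.eigenvalues_eq i] using h ⇑(hA.eigenvectorBasis i)

lemma Matrix.IsHermitian.cfc_mul_cfc (hA : A.IsHermitian) (f g : ℝ → ℝ) :
    hA.cfc f * hA.cfc g = hA.cfc (fun t => f t * g t) := by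
  simp only [IsHermitian.cfc, ← map_mul, diagonal_mul_diagonal]
  congr 2 with i
  simp

lemma Matrix.IsHermitian.cfc_sub_cfc (hA : A.IsHermitian) (f g : ℝ → ℝ) :
    hA.cfc f - hA.cfc g = hA.cfc (fun t => f t - g t) := by
  simp only [IsHermitian.cfc, ← map_sub, diagonal_sub]
  congr 2 with i
  simp

lemma Matrix.IsHermitian.cfc_congr (hA : A.IsHermitian) {f g : ℝ → ℝ}
    (hfg : ∀ i, f (hA.eigenvalues i) = g (hA.eigenvalues i)) : hA.cfc f = hA.cfc g := by
  simp only [IsHermitian.cfc, Function.comp_def, hfg]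

lemma Matrix.IsHermitian.cfc_one (hA : A.IsHermitian) : hA.cfc (fun _ => 1) = 1 := by
  simp only [IsHermitian.cfc, Function.comp_def, diagonal_one, map_one]

lemma invSqrt_eq_cfc (hA : A.PosDef) : invSqrt A = hA.isHermitian.cfc (fun t => (√t)⁻¹) := by
  rw [invSqrt, dif_pos hA.posSemidef]
  refine inv_eq_right_inv ?_
  change hA.isHermitian.cfc Real.sqrt * _ = 1
  rw [hA.isHermitian.cfc_mul_cfc, ← hA.isHermitian.cfc_one]
  exact hA.isHermitian.cfc_congr fun i =>
    mul_inv_cancel₀ (Real.sqrt_pos.mpr (hA.eigenvalues_pos i)).ne'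

lemma invSqrt_sub_one_eq_cfc (hA : A.PosDef) :
    invSqrt A - 1 = hA.isHermitian.cfc (fun t => (√t)⁻¹ - 1) := by
  rw [invSqrt_eq_cfc hA, ← hA.isHermitian.cfc_one, hA.isHermitian.cfc_sub_cfc]

lemma l2norm_cfc_mulVec_le (hA : A.IsHermitian) {f : ℝ → ℝ} {c : ℝ} (hc : 0 ≤ c)
    (hf : ∀ i, |f (hA.eigenvalues i)| ≤ c) (v : m → ℂ) :
    l2norm (hA.cfc f *ᵥ v) ≤ c * l2norm v := by
  rw [IsHermitian.cfc, Unitary.conjStarAlgAut_apply, ← mulVec_mulVec, ← mulVec_mulVec,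
    l2norm_unitary_mulVec (SetLike.coe_mem _),
    ← l2norm_unitary_mulVec (Unitary.star_mem (SetLike.coe_mem _)) v]
  exact l2norm_diagonal_mulVec_le hc (fun k => by simpa using hf k) _

end spectral

/-- If `(bᵢ)` is an orthonormal basis of `ℂ^d`, the `(b'ᵢ)` are unit vectors with
`‖b'ᵢ − bᵢ‖₂ ≤ η`, and `2dη ≤ 1/2`, then the `(b'ᵢ)` are linearly independent,
`B = Σᵢ |b'ᵢ⟩⟨b'ᵢ|` is positive definite, and the orthonormalized vectors
`b''ᵢ = B^{−1/2} b'ᵢ` satisfy `‖b''ᵢ − bᵢ‖₂ ≤ (4d + 1)η`. -/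
theorem orthonormalization_close {d : ℕ} (b b' : Fin d → Fin d → ℂ) (η : ℝ)
    (hb : ∀ i j, (∑ k, star (b i k) * b j k) = if i = j then (1 : ℂ) else 0)
    (hb' : ∀ i, l2norm (b' i) = 1)
    (hclose : ∀ i, l2norm (b' i - b i) ≤ η)
    (hsmall : 2 * d * η ≤ 1 / 2) :
    LinearIndependent ℂ b' ∧ (gram b').PosDef ∧
    ∀ i, l2norm (invSqrt (gram b') *ᵥ b' i - b i) ≤ (4 * d + 1) * η := by
  have hon := orthonormal_toLp_of_star_dotProduct hb
  have hquad (x : Fin d → ℂ) :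
      |RCLike.re (star x ⬝ᵥ (gram b' *ᵥ x)) - l2norm x ^ 2| ≤ 2 * d * η * l2norm x ^ 2 := by
    have h := abs_sum_norm_star_dotProduct_sq_sub_le
      (fun i => (l2norm_eq_norm_toLp (b i)).trans_le (hon.1 i).le) (fun i => (hb' i).le) hclose x
    rwa [sum_norm_star_dotProduct_sq hon rfl x, Fintype.card_fin,
      ← re_star_dotProduct_gram_mulVec] at h
  have heig := abs_eigenvalues_sub_one_le (gram_isHermitian b') hquad
  have hPD : (gram b').PosDef := (gram_isHermitian b').posDef_iff_eigenvalues_pos.mpr fun i => by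
    linarith [neg_abs_le ((gram_isHermitian b').eigenvalues i - 1), heig i]
  refine ⟨linearIndependent_of_gram_posDef hPD, hPD, fun i => ?_⟩
  have hη : 0 ≤ η := (l2norm_nonneg _).trans (hclose i)
  have hcorr : l2norm ((invSqrt (gram b') - 1) *ᵥ b' i) ≤ 2 * d * η := by
    simpa [invSqrt_sub_one_eq_cfc hPD, hb' i] using l2norm_cfc_mulVec_le _ (by positivity)
      (fun k => abs_inv_sqrt_sub_one_le hsmall (heig k)) (b' i)
  calc l2norm (invSqrt (gram b') *ᵥ b' i - b i)
      = l2norm ((invSqrt (gram b') - 1) *ᵥ b' i + (b' i - b i)) := by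
        rw [sub_mulVec, one_mulVec, sub_add_sub_cancel]
    _ ≤ l2norm ((invSqrt (gram b') - 1) *ᵥ b' i) + l2norm (b' i - b i) := l2norm_add_le _ _
    _ ≤ 2 * d * η + η := add_le_add hcorr (hclose i)
    _ ≤ (4 * d + 1) * η := by nlinarith [Nat.cast_nonneg (α := ℝ) d]
end
end

section
/- Let D ≥ 1, let e₀ be a fixed unit vector in ℂ^D, and let μ be the Haar probability measure on the unitary group U(D). Then ∫_{U(D)} (U e₀)(U e₀)† ⊗ (U e₀)(U e₀)† dμ(U) = (𝟙 + F) / (D(D+1)), where F is the swap operator on ℂ^D ⊗ ℂ^D, defined on basis vectors by F(|i⟩⊗|j⟩) = |j⟩⊗|i⟩, and 𝟙 is the identity on ℂ^D ⊗ ℂ^D. In particular, for any D × D complex matrices X and Y, Tr(F (X ⊗ Y)) = Tr(XY). -/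
open Matrix Kronecker BigOperators MeasureTheory

noncomputable section

instance matrixMeasurableSpace {m n : Type*} : MeasurableSpace (Matrix m n ℂ) :=
  (inferInstance : MeasurableSpace (m → n → ℂ))

/-- The rank-one matrix `|w⟩⟨w| = w w†`. -/
def rankOne {m : Type*} (w : m → ℂ) : Matrix m m ℂ :=
  Matrix.vecMulVec w (star w)

/-- The swap operator `F` on `ℂ^D ⊗ ℂ^D`, with `F (|i⟩⊗|j⟩) = |j⟩⊗|i⟩`. -/
def swapOp (D : ℕ) : Matrix (Fin D × Fin D) (Fin D × Fin D) ℂ :=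
  Matrix.of fun p q => if p.1 = q.2 ∧ p.2 = q.1 then 1 else 0

/-!
Write `M i j k l = ∫ vᵢ vⱼ v̄ₖ v̄ₗ dμ` for the fourth moments of `v = U e₀`. Since `(g U) e₀ = g v`,
left invariance of `μ` makes `M` an invariant tensor: `M = (g ⊗ g) M (g ⊗ g)†` for every unitary
`g`. Diagonal phases force `M i j k l = 0` unless `{i, j} = {k, l}`; the Householder reflection
in `eᵢ - eⱼ` swaps two coordinates, so `M i i i i` does not depend on `i`; the reflection in
`eᵢ + 2 eⱼ`, whose `i`-th row `(3/5, -4/5)` mixes two coordinates, gives `M i i i i = 2 M i j i j`.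
Finally `∑ M a b a b = ∫ ‖v‖⁴ dμ = 1` fixes `M i i i i = 2 / (D (D + 1))`.
-/

open ComplexConjugate

def quartic {n : Type*} (v : n → ℂ) (i j k l : n) : ℂ :=
  v i * v j * conj (v k) * conj (v l)

section Algebra

variable {n : Type*} [Fintype n]

lemma quartic_mulVec (g : Matrix n n ℂ) (v : n → ℂ) (i j k l : n) :
    quartic (g *ᵥ v) i j k l =
      ∑ a, g i a * ∑ b, g j b * ∑ c, conj (g k c) * ∑ d, conj (g l d) * quartic v a b c d := by
  simp only [quartic, mulVec, dotProduct, map_sum, map_mul, mul_assoc]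
  simp_rw [Finset.sum_mul_sum, Finset.mul_sum]
  refine Fintype.sum_congr _ _ fun a => Fintype.sum_congr _ _ fun b =>
    Fintype.sum_congr _ _ fun c => Fintype.sum_congr _ _ fun d => ?_
  ring

lemma sum_sum_quartic (v : n → ℂ) : ∑ a, ∑ b, quartic v a b a b = (star v ⬝ᵥ v) ^ 2 := by
  simp only [quartic, dotProduct, sq, Finset.sum_mul_sum, Pi.star_apply, RCLike.star_def]
  exact Fintype.sum_congr _ _ fun a => Fintype.sum_congr _ _ fun b => by ring

lemma star_dotProduct_self_eq_one {v : n → ℂ} (hv : ∑ x, ‖v x‖ ^ 2 = 1) : star v ⬝ᵥ v = 1 := by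
  simp only [dotProduct, Pi.star_apply, RCLike.star_def, Complex.conj_mul']
  exact_mod_cast hv

variable [DecidableEq n]

lemma sum_pair_mul {i j : n} (hij : i ≠ j) (α β : ℂ) (F : n → ℂ) :
    ∑ a, (Pi.single i α + Pi.single j β : n → ℂ) a * F a = α * F i + β * F j := by
  rw [Fintype.sum_eq_add i j hij fun a ha => by simp [ha.1, ha.2]]
  simp [hij, hij.symm]

lemma sum_conj_pair_mul {i j : n} (hij : i ≠ j) (α β : ℂ) (F : n → ℂ) :
    ∑ a, conj ((Pi.single i α + Pi.single j β : n → ℂ) a) * F a =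
      conj α * F i + conj β * F j := by
  rw [Fintype.sum_eq_add i j hij fun a ha => by simp [ha.1, ha.2]]
  simp [hij, hij.symm]

lemma star_pair_dotProduct_pair {i j : n} (hij : i ≠ j) (α β : ℂ) :
    star (Pi.single i α + Pi.single j β : n → ℂ) ⬝ᵥ (Pi.single i α + Pi.single j β) =
      conj α * α + conj β * β := by
  simp only [dotProduct, Pi.star_apply, RCLike.star_def]
  rw [sum_conj_pair_mul hij]
  simp [hij, hij.symm]

end Algebra

section Phase

variable {n : Type*} [DecidableEq n]

def phaseAt (p x : n) : ℂ := if x = p then Complex.I else 1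

lemma phaseAt_eq_I_iff {p x : n} : phaseAt p x = Complex.I ↔ x = p := by
  unfold phaseAt
  split_ifs with hx <;> simp [hx, Complex.ext_iff]

lemma phaseAt_self (p : n) : phaseAt p p = Complex.I := if_pos rfl

lemma phaseAt_ne_zero (p x : n) : phaseAt p x ≠ 0 := by
  unfold phaseAt
  split_ifs <;> simp

lemma conj_phaseAt_mul_self (p x : n) : conj (phaseAt p x) * phaseAt p x = 1 := by
  unfold phaseAt
  split_ifs <;> simp

lemma pairing_of_phaseAt {i j k l : n}
    (h : ∀ p, phaseAt p i * phaseAt p j = phaseAt p k * phaseAt p l) :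
    (i = k ∧ j = l) ∨ (i = l ∧ j = k) := by
  obtain rfl | rfl : k = i ∨ l = i := by
    -- otherwise at `p = i` the left side is `I` or `-1` while the right side is `1`
    by_contra! hkl
    have hi := h i
    simp only [phaseAt, if_neg hkl.1, if_neg hkl.2, mul_one] at hi
    split_ifs at hi <;> norm_num [Complex.ext_iff] at hi
  · have hj := h j
    rw [phaseAt_self] at hj
    exact .inl ⟨rfl, (phaseAt_eq_I_iff.mp (mul_left_cancel₀ (phaseAt_ne_zero j k) hj).symm).symm⟩
  · have hj := (h j).trans (mul_comm _ _)
    rw [phaseAt_self] at hj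
    exact .inr ⟨rfl, (phaseAt_eq_I_iff.mp (mul_left_cancel₀ (phaseAt_ne_zero j l) hj).symm).symm⟩

end Phase

section Unitary

variable {n : Type*} [Fintype n] [DecidableEq n]

lemma diagonal_mem_unitaryGroup {d : n → ℂ} (hd : ∀ x, conj (d x) * d x = 1) :
    diagonal d ∈ unitaryGroup n ℂ := by
  rw [mem_unitaryGroup_iff', star_eq_conjTranspose, diagonal_conjTranspose,
    diagonal_mul_diagonal, ← diagonal_one]
  exact congrArg diagonal (funext hd)

def householder (w : n → ℂ) : Matrix n n ℂ :=
  1 - (2 / (star w ⬝ᵥ w)) • rankOne w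

open scoped ComplexOrder in
lemma householder_mem_unitaryGroup {w : n → ℂ} (hw : w ≠ 0) :
    householder w ∈ unitaryGroup n ℂ := by
  have hs : star w ⬝ᵥ w ≠ 0 := dotProduct_star_self_eq_zero.not.mpr hw
  have hself : star (householder w) = householder w := by
    rw [householder, star_sub, star_one, star_smul, star_div₀, ← star_dotProduct, star_ofNat,
      star_eq_conjTranspose, rankOne, conjTranspose_vecMulVec, star_star]
  have hsq : rankOne w * rankOne w = (star w ⬝ᵥ w) • rankOne w := by
    rw [rankOne, vecMulVec_mul_vecMulVec, vecMulVec_smul]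
  have hc : 2 / (star w ⬝ᵥ w) * (2 / (star w ⬝ᵥ w)) * (star w ⬝ᵥ w) =
      2 * (2 / (star w ⬝ᵥ w)) := by
    field_simp
  rw [mem_unitaryGroup_iff', hself, householder, sub_mul, mul_sub, mul_sub, smul_mul_smul_comm,
    hsq, smul_smul, hc]
  simp only [mul_one, one_mul]
  module

lemma sum_householder_mul (w F : n → ℂ) (x : n) :
    ∑ a, householder w x a * F a = F x - 2 / (star w ⬝ᵥ w) * w x * ∑ a, conj (w a) * F a := by
  simp [householder, rankOne, vecMulVec_apply, one_apply, sub_mul, Finset.sum_sub_distrib,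
    Finset.mul_sum, mul_assoc]

lemma sum_conj_householder_mul (w F : n → ℂ) (x : n) :
    ∑ a, conj (householder w x a) * F a =
      F x - 2 / (star w ⬝ᵥ w) * conj (w x) * ∑ a, w a * F a := by
  have hs : conj (star w ⬝ᵥ w) = star w ⬝ᵥ w := (star_dotProduct w w).symm
  simp [householder, rankOne, vecMulVec_apply, one_apply, sub_mul, Finset.sum_sub_distrib,
    Finset.mul_sum, mul_assoc, hs, map_ofNat]

lemma star_unitary_mulVec_dotProduct (U : unitaryGroup n ℂ) (v : n → ℂ) :
    star ((U : Matrix n n ℂ) *ᵥ v) ⬝ᵥ ((U : Matrix n n ℂ) *ᵥ v) = star v ⬝ᵥ v := by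
  rw [star_mulVec, dotProduct_mulVec, vecMul_vecMul, ← star_eq_conjTranspose,
    UnitaryGroup.star_mul_self, vecMul_one]

lemma norm_unitary_mulVec_apply_le (U : unitaryGroup n ℂ) (v : n → ℂ) (i : n) :
    ‖((U : Matrix n n ℂ) *ᵥ v) i‖ ≤ ∑ x, ‖v x‖ :=
  (norm_sum_le _ _).trans <| Finset.sum_le_sum fun x _ => by
    rw [norm_mul]
    exact mul_le_of_le_one_left (norm_nonneg _) (entry_norm_bound_of_unitary U.2 i x)

@[fun_prop]
lemma measurable_unitaryGroup_apply (i j : n) :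
    Measurable fun U : unitaryGroup n ℂ => (U : Matrix n n ℂ) i j :=
  (measurable_pi_apply j).comp ((measurable_pi_apply i).comp measurable_subtype_coe)

instance : MeasurableMul (unitaryGroup n ℂ) where
  measurable_const_mul g :=
    .subtype_mk <| measurable_pi_lambda _ fun i => measurable_pi_lambda _ fun j => by
      simp only [mul_apply]; fun_prop
  measurable_mul_const g :=
    .subtype_mk <| measurable_pi_lambda _ fun i => measurable_pi_lambda _ fun j => by
      simp only [mul_apply]; fun_prop

lemma integrable_quartic_mulVec {μ : Measure (unitaryGroup n ℂ)} [IsFiniteMeasure μ]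
    (v : n → ℂ) (i j k l : n) :
    Integrable (fun U : unitaryGroup n ℂ => quartic ((U : Matrix n n ℂ) *ᵥ v) i j k l) μ := by
  refine .of_bound (Measurable.aestronglyMeasurable (by
    simp only [quartic, mulVec, dotProduct]; fun_prop)) ((∑ x, ‖v x‖) ^ 4) (ae_of_all _ fun U => ?_)
  have hv := norm_unitary_mulVec_apply_le U v
  simp only [quartic, norm_mul, Complex.norm_conj]
  calc _ ≤ (∑ x, ‖v x‖) * (∑ x, ‖v x‖) * (∑ x, ‖v x‖) * (∑ x, ‖v x‖) := by
        gcongr <;> apply hv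
    _ = _ := by ring

end Unitary

section FourthMoment

variable {n : Type*} [Fintype n] [DecidableEq n]

def fourthMoment (μ : Measure (unitaryGroup n ℂ)) (v : n → ℂ) (i j k l : n) : ℂ :=
  ∫ U, quartic ((U : Matrix n n ℂ) *ᵥ v) i j k l ∂μ

variable {μ : Measure (unitaryGroup n ℂ)} {v : n → ℂ}

lemma fourthMoment_swap_left (i j k l : n) :
    fourthMoment μ v i j k l = fourthMoment μ v j i k l := by
  simp only [fourthMoment, quartic]
  congr 1 with U
  ring

lemma fourthMoment_swap_right (i j k l : n) :
    fourthMoment μ v i j k l = fourthMoment μ v i j l k := by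
  simp only [fourthMoment, quartic]
  congr 1 with U
  ring

lemma sum_sum_fourthMoment [IsProbabilityMeasure μ] (hv : star v ⬝ᵥ v = 1) :
    ∑ a, ∑ b, fourthMoment μ v a b a b = 1 := by
  have hq := integrable_quartic_mulVec (μ := μ) v
  simp only [fourthMoment]
  simp (disch := (intros; fun_prop)) only [← integral_finsetSum, sum_sum_quartic,
    star_unitary_mulVec_dotProduct, hv]
  simp

section Invariance

variable [IsFiniteMeasure μ] [μ.IsMulLeftInvariant]

lemma fourthMoment_eq_sum (g : unitaryGroup n ℂ) (i j k l : n) :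
    fourthMoment μ v i j k l =
      ∑ a, (g : Matrix n n ℂ) i a * ∑ b, (g : Matrix n n ℂ) j b *
        ∑ c, conj ((g : Matrix n n ℂ) k c) * ∑ d, conj ((g : Matrix n n ℂ) l d) *
          fourthMoment μ v a b c d := by
  have hq := integrable_quartic_mulVec (μ := μ) v
  rw [fourthMoment, ← integral_mul_left_eq_self _ g]
  simp only [Submonoid.coe_mul, ← mulVec_mulVec, quartic_mulVec (g : Matrix n n ℂ), fourthMoment]
  simp (disch := (intros; fun_prop)) only [integral_finsetSum, integral_const_mul]

lemma fourthMoment_eq_phase_mul {d : n → ℂ} (hd : ∀ x, conj (d x) * d x = 1) (i j k l : n) :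
    fourthMoment μ v i j k l =
      d i * d j * conj (d k) * conj (d l) * fourthMoment μ v i j k l := by
  conv_lhs => rw [fourthMoment_eq_sum ⟨diagonal d, diagonal_mem_unitaryGroup hd⟩]
  simp only [diagonal_apply, apply_ite (starRingEnd ℂ), map_zero, ite_mul, zero_mul,
    Finset.sum_ite_eq, Finset.mem_univ, ↓reduceIte]
  ring

lemma fourthMoment_eq_zero {i j k l : n} (h : ¬((i = k ∧ j = l) ∨ (i = l ∧ j = k))) :
    fourthMoment μ v i j k l = 0 := by
  by_contra hM
  refine h (pairing_of_phaseAt fun p => ?_)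
  have hd := conj_phaseAt_mul_self p
  have h1 : phaseAt p i * phaseAt p j * conj (phaseAt p k) * conj (phaseAt p l) = 1 :=
    (mul_eq_right₀ hM).mp (fourthMoment_eq_phase_mul hd i j k l).symm
  calc phaseAt p i * phaseAt p j
      = phaseAt p i * phaseAt p j * (conj (phaseAt p k) * phaseAt p k) *
          (conj (phaseAt p l) * phaseAt p l) := by rw [hd, hd, mul_one, mul_one]
    _ = (phaseAt p i * phaseAt p j * conj (phaseAt p k) * conj (phaseAt p l)) *
          (phaseAt p k * phaseAt p l) := by ring
    _ = phaseAt p k * phaseAt p l := by rw [h1, one_mul]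

lemma fourthMoment_diag_eq {i j : n} (hij : i ≠ j) :
    fourthMoment μ v j j j j = fourthMoment μ v i i i i := by
  have hw : (Pi.single i 1 + Pi.single j (-1) : n → ℂ) ≠ 0 := fun h => by
    simpa [hij] using congrFun h i
  have hww : star (Pi.single i 1 + Pi.single j (-1) : n → ℂ) ⬝ᵥ
      (Pi.single i 1 + Pi.single j (-1)) = 2 := by
    rw [star_pair_dotProduct_pair hij]
    norm_num
  rw [fourthMoment_eq_sum ⟨householder _, householder_mem_unitaryGroup hw⟩]
  simp only [sum_householder_mul, sum_conj_householder_mul, sum_pair_mul hij,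
    sum_conj_pair_mul hij, hww]
  simp [hij.symm]

lemma fourthMoment_diag_eq_two_mul {i j : n} (hij : i ≠ j) :
    fourthMoment μ v i i i i = 2 * fourthMoment μ v i j i j := by
  have hw : (Pi.single i 1 + Pi.single j 2 : n → ℂ) ≠ 0 := fun h => by
    simpa [hij] using congrFun h i
  have hww : star (Pi.single i 1 + Pi.single j 2 : n → ℂ) ⬝ᵥ
      (Pi.single i 1 + Pi.single j 2) = 5 := by
    rw [star_pair_dotProduct_pair hij, map_one, map_ofNat]
    norm_num
  have h := fourthMoment_eq_sum (μ := μ) (v := v) ⟨householder _, householder_mem_unitaryGroup hw⟩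
    i i i i
  simp only [sum_householder_mul, sum_conj_householder_mul, sum_pair_mul hij,
    sum_conj_pair_mul hij, hww] at h
  simp only [Pi.add_apply, Pi.single_eq_same, Pi.single_eq_of_ne hij, add_zero, map_one, mul_one,
    one_mul, map_ofNat] at h
  simp (disch := simp [hij, hij.symm]) only [fourthMoment_eq_zero] at h
  rw [fourthMoment_diag_eq hij, fourthMoment_swap_left j i i j, fourthMoment_swap_left j i j i,
    fourthMoment_swap_right i j j i] at h
  -- with `x = M i i i i`, `y = M i j i j`, `h` reads `x = ((3/5)⁴ + (4/5)⁴) x + 4 (3/5)² (4/5)² y`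
  linear_combination (625 / 288 : ℂ) * h

end Invariance

section Normalized

variable [IsProbabilityMeasure μ] [μ.IsMulLeftInvariant]

lemma fourthMoment_diag (hv : star v ⬝ᵥ v = 1) (i : n) :
    fourthMoment μ v i i i i = 2 * ((Fintype.card n : ℂ) * (Fintype.card n + 1))⁻¹ := by
  set x := fourthMoment μ v i i i i
  have hrow : ∀ a b, fourthMoment μ v a b a b = x / 2 + if a = b then x / 2 else 0 := by
    intro a b
    have hdiag : fourthMoment μ v a a a a = x := by
      rcases eq_or_ne a i with rfl | hai
      · rfl
      · exact fourthMoment_diag_eq (Ne.symm hai)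
    split_ifs with hab
    · rw [← hab, hdiag]; ring
    · rw [← hdiag, fourthMoment_diag_eq_two_mul hab]; ring
  have hsum := sum_sum_fourthMoment (μ := μ) hv
  simp only [hrow, Finset.sum_add_distrib, Finset.sum_ite_eq, Finset.mem_univ, if_true,
    Finset.sum_const, Finset.card_univ, nsmul_eq_mul] at hsum
  have hN : (Fintype.card n : ℂ) ≠ 0 := Nat.cast_ne_zero.mpr (Fintype.card_pos_iff.mpr ⟨i⟩).ne'
  have hN1 : (Fintype.card n : ℂ) + 1 ≠ 0 := by exact_mod_cast Nat.succ_ne_zero (Fintype.card n)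
  field_simp
  linear_combination 2 * hsum

lemma fourthMoment_offDiag (hv : star v ⬝ᵥ v = 1) {i j : n} (hij : i ≠ j) :
    fourthMoment μ v i j i j = ((Fintype.card n : ℂ) * (Fintype.card n + 1))⁻¹ := by
  have h := fourthMoment_diag_eq_two_mul (μ := μ) (v := v) hij
  rw [fourthMoment_diag hv] at h
  linear_combination -h / 2

theorem fourthMoment_eq (hv : star v ⬝ᵥ v = 1) (i j k l : n) :
    fourthMoment μ v i j k l = ((Fintype.card n : ℂ) * (Fintype.card n + 1))⁻¹ *
      ((if i = k ∧ j = l then 1 else 0) + (if i = l ∧ j = k then 1 else 0)) := by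
  by_cases h₁ : i = k ∧ j = l
  · obtain ⟨rfl, rfl⟩ := h₁
    rcases eq_or_ne i j with rfl | hij
    · rw [fourthMoment_diag hv, if_pos ⟨rfl, rfl⟩]; ring
    · rw [fourthMoment_offDiag hv hij]; simp [hij]
  by_cases h₂ : i = l ∧ j = k
  · obtain ⟨rfl, rfl⟩ := h₂
    have hij : i ≠ j := fun h => h₁ ⟨h, h.symm⟩
    rw [fourthMoment_swap_right, fourthMoment_offDiag hv hij]; simp [hij]
  rw [fourthMoment_eq_zero (not_or.mpr ⟨h₁, h₂⟩), if_neg h₁, if_neg h₂]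
  ring

end Normalized

end FourthMoment

lemma kronecker_rankOne_apply {m : Type*} (v : m → ℂ) (i j k l : m) :
    (rankOne v ⊗ₖ rankOne v) (i, j) (k, l) = quartic v i j k l := by
  simp only [kroneckerMap_apply, rankOne, vecMulVec_apply, Pi.star_apply, RCLike.star_def, quartic]
  ring

lemma one_add_swapOp_apply {D : ℕ} (i j k l : Fin D) :
    (1 + swapOp D) (i, j) (k, l) =
      (if i = k ∧ j = l then 1 else 0) + (if i = l ∧ j = k then 1 else 0) := by
  simp [one_apply, swapOp, Prod.ext_iff]

lemma trace_swapOp_mul_kronecker {D : ℕ} (X Y : Matrix (Fin D) (Fin D) ℂ) :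
    (swapOp D * (X ⊗ₖ Y)).trace = (X * Y).trace := by
  simp only [trace, swapOp, ite_and, diag_apply, mul_apply, of_apply, kroneckerMap_apply, ite_mul,
    one_mul, zero_mul, Fintype.sum_prod_type, Finset.sum_ite_eq, Finset.mem_univ, ↓reduceIte]
  exact Finset.sum_comm

theorem haar_average_twofold_general {D : ℕ}
    (e₀ : Fin D → ℂ) (he₀ : ∑ x, ‖e₀ x‖ ^ 2 = 1)
    (μ : Measure ↥(Matrix.unitaryGroup (Fin D) ℂ))
    (hμprob : IsProbabilityMeasure μ)
    (hμinv : ∀ g : ↥(Matrix.unitaryGroup (Fin D) ℂ), μ.map (fun x => g * x) = μ) :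
    (∀ i j k l : Fin D,
      (∫ U : ↥(Matrix.unitaryGroup (Fin D) ℂ),
          (rankOne ((U : Matrix (Fin D) (Fin D) ℂ) *ᵥ e₀) ⊗ₖ
            rankOne ((U : Matrix (Fin D) (Fin D) ℂ) *ᵥ e₀)) (i, j) (k, l) ∂μ)
        = ((D : ℂ) * ((D : ℂ) + 1))⁻¹ *
            ((1 + swapOp D) (i, j) (k, l))) ∧
    (∀ X Y : Matrix (Fin D) (Fin D) ℂ, (swapOp D * (X ⊗ₖ Y)).trace = (X * Y).trace) := by
  refine ⟨fun i j k l => ?_, trace_swapOp_mul_kronecker⟩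
  have : μ.IsMulLeftInvariant := ⟨hμinv⟩
  have h := fourthMoment_eq (μ := μ) (star_dotProduct_self_eq_one he₀) i j k l
  rw [Fintype.card_fin] at h
  simpa only [kronecker_rankOne_apply, one_add_swapOp_apply, fourthMoment] using h

/-- For a Haar-distributed unitary `U` (i.e. `μ` is a left-invariant Borel probability
measure on `U(D)`) and a fixed unit vector `e₀`, the average of
`|Ue₀⟩⟨Ue₀| ⊗ |Ue₀⟩⟨Ue₀|` equals `(𝟙 + F)/(D(D+1))`, where `F` is the swap operator.
In particular, `Tr(F (X ⊗ Y)) = Tr(XY)` for all `X, Y`. -/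
theorem haar_average_twofold {D : ℕ} (hD : 1 ≤ D)
    (e₀ : Fin D → ℂ) (he₀ : ∑ x, ‖e₀ x‖ ^ 2 = 1)
    (μ : Measure ↥(Matrix.unitaryGroup (Fin D) ℂ))
    (hμprob : IsProbabilityMeasure μ)
    (hμinv : ∀ g : ↥(Matrix.unitaryGroup (Fin D) ℂ), μ.map (fun x => g * x) = μ) :
    (∀ i j k l : Fin D,
      (∫ U : ↥(Matrix.unitaryGroup (Fin D) ℂ),
          (rankOne ((U : Matrix (Fin D) (Fin D) ℂ) *ᵥ e₀) ⊗ₖ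
            rankOne ((U : Matrix (Fin D) (Fin D) ℂ) *ᵥ e₀)) (i, j) (k, l) ∂μ)
        = ((D : ℂ) * ((D : ℂ) + 1))⁻¹ *
            ((1 + swapOp D) (i, j) (k, l))) ∧
    (∀ X Y : Matrix (Fin D) (Fin D) ℂ, (swapOp D * (X ⊗ₖ Y)).trace = (X * Y).trace) :=
  haar_average_twofold_general e₀ he₀ μ hμprob hμinv

end
end
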